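/- arXiv:2003.11653 — 7 statements merged into one kernel-verified Lean document; each statement's English description precedes it below -/
import Mathlib

section
/- For a real sequence s_0, s_1, s_2, ..., with Hankel determinants Δ_{p,k} = det[(s_{p+i+j})_{0 ≤ i,j ≤ k-1}], one has Δ_{2,k}·Δ_{0,k} − Δ_{2,k-1}·Δ_{0,k+1} = Δ_{1,k}² for all k ≥ 1. -/
/-!
Deleting the first and/or last row and column of the Hankel matrix `(s (i + j))_{0 ≤ i, j ≤ k}`
leaves Hankel matrices again, so the identity is the Desnanot–Jacobi identity (Dodgson
condensation) for that matrix. Desnanot–Jacobi is the `2 × 2` case of Jacobi's theorem on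
complementary minors of the adjugate: multiplying `M` by the block matrix `[[A₁₁, 0], [A₂₁, 1]]`
built from `A = adj M` gives the block triangular matrix `[[det M • 1, M₁₂], [0, M₂₂]]`, and taking
determinants yields Jacobi's identity multiplied by `det M`.
-/

/-- Hankel determinant `Δ_{p,k}` of a real sequence:
the determinant of the `k × k` matrix with `(i,j)` entry `s (p + i + j)`.
By convention `Δ_{p,0} = 1` (determinant of the empty matrix). -/
noncomputable def hankelDetN (s : ℕ → ℝ) (p k : ℕ) : ℝ :=
  (Matrix.of fun i j : Fin k => s (p + (i : ℕ) + (j : ℕ))).det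

open Matrix

lemma sumElim_ends_interior_injective (m : ℕ) :
    Function.Injective
      (Sum.elim ![(0 : Fin (m + 2)), Fin.last (m + 1)] fun i : Fin m => i.castSucc.succ) := by
  rintro (a | a) (b | b) h <;> (try fin_cases a) <;> (try fin_cases b) <;>
    simp_all [Fin.ext_iff] <;> omega

noncomputable def finEndsSumInteriorEquiv (m : ℕ) : Fin 2 ⊕ Fin m ≃ Fin (m + 2) :=
  Equiv.ofBijective _ <| (Fintype.bijective_iff_injective_and_card _).2
    ⟨sumElim_ends_interior_injective m, by simp [add_comm]⟩

namespace Matrix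

variable {R : Type*} [CommRing R] {o n : Type*} [Fintype o] [Fintype n] [DecidableEq o]
  [DecidableEq n]

lemma det_mul_det_toBlocks₁₁_adjugate (M : Matrix (o ⊕ n) (o ⊕ n) R) :
    M.det * M.adjugate.toBlocks₁₁.det = M.det ^ Fintype.card o * M.toBlocks₂₂.det := by
  set A := M.adjugate
  have hMA : fromBlocks M.toBlocks₁₁ M.toBlocks₁₂ M.toBlocks₂₁ M.toBlocks₂₂ *
      fromBlocks A.toBlocks₁₁ A.toBlocks₁₂ A.toBlocks₂₁ A.toBlocks₂₂ =
        M.det • fromBlocks 1 0 0 1 := by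
    rw [fromBlocks_toBlocks, fromBlocks_toBlocks, fromBlocks_one]
    exact mul_adjugate M
  rw [fromBlocks_multiply, fromBlocks_smul, fromBlocks_inj, smul_zero] at hMA
  obtain ⟨h₁₁, -, h₂₁, -⟩ := hMA
  have hMP : M * fromBlocks A.toBlocks₁₁ 0 A.toBlocks₂₁ 1 =
      fromBlocks (M.det • 1) M.toBlocks₁₂ 0 M.toBlocks₂₂ := by
    conv_lhs => rw [← fromBlocks_toBlocks M]
    rw [fromBlocks_multiply, h₁₁, h₂₁]
    simp
  simpa [det_fromBlocks_zero₁₂, det_fromBlocks_zero₂₁, det_smul] using congrArg det hMP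

/-- **Jacobi's complementary minor theorem**. -/
theorem det_toBlocks₁₁_adjugate [Nonempty o] (M : Matrix (o ⊕ n) (o ⊕ n) R) :
    M.adjugate.toBlocks₁₁.det = M.det ^ (Fintype.card o - 1) * M.toBlocks₂₂.det := by
  -- `det M` can be cancelled for the universal matrix, of which `M` is a specialization.
  let X := mvPolynomialX (o ⊕ n) (o ⊕ n) ℤ
  suffices hX : X.adjugate.toBlocks₁₁.det = X.det ^ (Fintype.card o - 1) * X.toBlocks₂₂.det by
    let f := MvPolynomial.aeval (R := ℤ) fun p : (o ⊕ n) × (o ⊕ n) => M p.1 p.2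
    have hfX : f.mapMatrix X = M := mvPolynomialX_mapMatrix_aeval ℤ M
    have := congrArg f hX
    rwa [map_mul, map_pow, AlgHom.map_det, AlgHom.map_det, AlgHom.map_det,
      show f.mapMatrix X.adjugate.toBlocks₁₁ = (f.mapMatrix X.adjugate).toBlocks₁₁ from rfl,
      show f.mapMatrix X.toBlocks₂₂ = (f.mapMatrix X).toBlocks₂₂ from rfl,
      AlgHom.map_adjugate, hfX] at this
  apply mul_left_cancel₀ (det_mvPolynomialX_ne_zero (o ⊕ n) ℤ)
  rw [det_mul_det_toBlocks₁₁_adjugate, ← mul_assoc, ← pow_succ',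
    Nat.sub_add_cancel Fintype.card_pos]

theorem desnanot_jacobi {m : ℕ} (M : Matrix (Fin (m + 2)) (Fin (m + 2)) R) :
    (M.submatrix Fin.succ Fin.succ).det * (M.submatrix Fin.castSucc Fin.castSucc).det -
        (M.submatrix Fin.succ Fin.castSucc).det * (M.submatrix Fin.castSucc Fin.succ).det =
      M.det * (M.submatrix (fun i : Fin m => i.castSucc.succ) fun i => i.castSucc.succ).det := by
  let e := finEndsSumInteriorEquiv m
  have h := det_toBlocks₁₁_adjugate (M.submatrix e e)
  rw [adjugate_submatrix_equiv_self, det_fin_two, det_submatrix_equiv_self] at h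
  simp only [toBlocks₁₁, toBlocks₂₂, e, finEndsSumInteriorEquiv, Equiv.coe_ofBijective,
    submatrix_apply, Sum.elim_inl, Sum.elim_inr, adjugate_fin_succ_eq_det_submatrix,
    Nat.succ_eq_add_one, Fin.isValue, of_apply, cons_val_zero, cons_val_one, cons_val_fin_one,
    Fin.coe_ofNat_eq_mod, Nat.zero_mod, Fin.val_last, add_zero, zero_add, pow_zero, one_mul,
    Even.add_self, Even.neg_pow, one_pow, Fin.succAbove_zero, Fin.succAbove_last,
    Fintype.card_fin, Nat.add_one_sub_one, pow_one] at h
  change _ = M.det * (M.submatrix _ _).det at h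
  have hsign : ((-1 : R) ^ (m + 1)) * (-1) ^ (m + 1) = 1 := pow_mul_pow_eq_one _ (by norm_num)
  linear_combination h + (M.submatrix Fin.succ Fin.castSucc).det *
    (M.submatrix Fin.castSucc Fin.succ).det * hsign

end Matrix

lemma hankelDetN_eq_det_submatrix (s : ℕ → ℝ) (p a b : ℕ) {k l : ℕ} (f g : Fin k → Fin l)
    (hf : ∀ i, (f i : ℕ) = i + a) (hg : ∀ j, (g j : ℕ) = j + b) :
    ((Matrix.of fun i j : Fin l => s (p + i + j)).submatrix f g).det =
      hankelDetN s (p + a + b) k := by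
  unfold hankelDetN
  congr 1
  ext i j
  simp only [submatrix_apply, of_apply, hf, hg]
  ring_nf

theorem stmt_3 (s : ℕ → ℝ) (k : ℕ) (hk : 1 ≤ k) :
    hankelDetN s 2 k * hankelDetN s 0 k -
      hankelDetN s 2 (k - 1) * hankelDetN s 0 (k + 1) = (hankelDetN s 1 k) ^ 2 := by
  obtain ⟨m, rfl⟩ : ∃ m, k = m + 1 := ⟨k - 1, by omega⟩
  have h := desnanot_jacobi (Matrix.of fun i j : Fin (m + 2) => s (0 + i + j))
  have hankel := hankelDetN_eq_det_submatrix s 0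
  rw [hankel 1 1 Fin.succ Fin.succ (fun _ => rfl) (fun _ => rfl),
    hankel 0 0 Fin.castSucc Fin.castSucc (fun _ => rfl) (fun _ => rfl),
    hankel 1 0 Fin.succ Fin.castSucc (fun _ => rfl) (fun _ => rfl),
    hankel 0 1 Fin.castSucc Fin.succ (fun _ => rfl) (fun _ => rfl),
    hankel 1 1 (fun i => i.castSucc.succ) (fun i => i.castSucc.succ) (fun _ => rfl)
      (fun _ => rfl)] at h
  change _ = hankelDetN s 0 (m + 1 + 1) * _ at h
  simp only [zero_add, add_zero, Nat.add_sub_cancel] at h ⊢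
  linear_combination h
end

section
/- Let s_0, s_1, s_2, ... be the moment sequence of a non-negative Borel measure on ℝ (all moments finite). If the Hankel determinants Δ_{0,j} = det[(s_{i+l})_{0 ≤ i,l ≤ j-1}] are positive for j = 0, ..., k+1, then the sequence Δ_{1,k-1}, Δ_{1,k}, Δ_{1,k+1} of shifted Hankel determinants (with Δ_{1,j} = det[(s_{1+i+l})_{0 ≤ i,l ≤ j-1}]) contains no two consecutive zeros; that is, Δ_{1,k} = 0 implies Δ_{1,k-1} ≠ 0 and Δ_{1,k+1} ≠ 0. -/
open MeasureTheory

open Finset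

lemma exists_kernel (s : ℕ → ℝ) (p n : ℕ) (h : hankelDetN s p n = 0) :
    ∃ e : ℕ → ℝ, (∃ i, i < n ∧ e i ≠ 0) ∧ (∀ i, n ≤ i → e i = 0) ∧
      ∀ i < n, ∑ j ∈ Finset.range n, e j * s (p + i + j) = 0 := by
  obtain ⟨v, hv, hv0⟩ := (Matrix.exists_mulVec_eq_zero_iff).2 h
  refine ⟨fun j => if hj : j < n then v ⟨j, hj⟩ else 0, ?_, ?_, ?_⟩
  · obtain ⟨j, hj⟩ := Function.ne_iff.1 hv
    exact ⟨j, j.isLt, by simpa [j.isLt] using hj⟩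
  · intro i hi; simp [Nat.not_lt.2 hi]
  · intro i hi
    have := congrFun hv0 ⟨i, hi⟩
    simp only [Matrix.mulVec, dotProduct, Pi.zero_apply] at this
    rw [← Fin.sum_univ_eq_sum_range, ← this]
    refine Finset.sum_congr rfl fun j _ => ?_
    simp [j.isLt, mul_comm]

lemma key (ρ : Measure ℝ) (s : ℕ → ℝ)
    (hmom : ∀ j : ℕ, Integrable (fun l : ℝ => l ^ j) ρ)
    (hs : ∀ j : ℕ, s j = ∫ l, l ^ j ∂ρ)
    (m : ℕ) (hm : 1 ≤ m)
    (hdet : hankelDetN s 0 (m + 1) ≠ 0)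
    (h1 : hankelDetN s 1 m = 0) (h2 : hankelDetN s 1 (m + 1) = 0) : False := by
  obtain ⟨e, he1, he2, he3⟩ := exists_kernel s 1 m h1
  obtain ⟨f, hf1, hf2, hf3⟩ := exists_kernel s 1 (m + 1) h2
  -- Find P : coefficients of a nonzero polynomial of degree < m with
  -- ∑∑ P i P j s(2+i+j) = 0  (i.e. ∫ (λ P(λ))² dρ = 0).
  obtain ⟨P, hP1, hP3⟩ :
      ∃ P : ℕ → ℝ, (∃ i, i < m ∧ P i ≠ 0) ∧
        ∑ i ∈ range m, P i * (∑ j ∈ range m, P j * s (2 + i + j)) = 0 := by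
    by_cases hfm : f m = 0
    ·
      have hf3' : ∀ i < m + 1, ∑ j ∈ range m, f j * s (1 + i + j) = 0 := by
        intro i hi
        have := hf3 i hi
        rwa [Finset.sum_range_succ, hfm, zero_mul, add_zero] at this
      refine ⟨f, ?_, ?_⟩
      · obtain ⟨i, hi, hne⟩ := hf1
        refine ⟨i, ?_, hne⟩
        rcases Nat.lt_succ_iff_lt_or_eq.1 hi with h | h
        · exact h
        · exact absurd (h ▸ hne) (by simp [hfm])
      · apply Finset.sum_eq_zero
        intro i hi
        have : ∑ j ∈ range m, f j * s (2 + i + j)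
            = ∑ j ∈ range m, f j * s (1 + (i + 1) + j) := by
          refine Finset.sum_congr rfl fun j _ => ?_
          congr 2
          omega
        rw [this, hf3' (i + 1) (by have := Finset.mem_range.1 hi; omega), mul_zero]
    · -- use e
      refine ⟨e, he1, ?_⟩
      have hkey : f m * (∑ i ∈ range m, e i * (∑ j ∈ range m, e j * s (2 + i + j))) = 0 := by
        set g : ℕ → ℝ := fun j => f m * (if j = 0 then 0 else e (j - 1)) - e (m - 1) * f j
          with hg
        have hinner : ∀ i < m,
            f m * (∑ j ∈ range m, e j * s (2 + i + j)) = ∑ j ∈ range m, g j * s (1 + i + j) := by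
          intro i hi
          have hA : ∑ j ∈ range (m + 1),
              (if j = 0 then (0:ℝ) else e (j - 1)) * s (1 + i + j)
              = ∑ j ∈ range m, e j * s (2 + i + j) := by
            rw [Finset.sum_range_succ']
            simp only [reduceIte, zero_mul, add_zero, Nat.add_sub_cancel,
              if_neg (Nat.succ_ne_zero _)]
            apply Finset.sum_congr rfl
            intro j hj
            congr 2
            omega
          have hGm : g m = 0 := by
            simp only [hg]
            rw [if_neg (by omega)]
            ring
          have : ∑ j ∈ range m, g j * s (1 + i + j)
              = ∑ j ∈ range (m + 1), g j * s (1 + i + j) := by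
            rw [Finset.sum_range_succ, hGm, zero_mul, add_zero]
          rw [this]
          have hsplit : ∑ j ∈ range (m + 1), g j * s (1 + i + j)
              = f m * ∑ j ∈ range (m + 1), (if j = 0 then (0:ℝ) else e (j - 1)) * s (1 + i + j)
                - e (m - 1) * ∑ j ∈ range (m + 1), f j * s (1 + i + j) := by
            rw [Finset.mul_sum, Finset.mul_sum, ← Finset.sum_sub_distrib]
            refine Finset.sum_congr rfl fun j _ => ?_
            simp only [hg]
            ring
          rw [hsplit, hA, hf3 i (by omega), mul_zero, sub_zero]
      -- now compute
        calc f m * ∑ i ∈ range m, e i * (∑ j ∈ range m, e j * s (2 + i + j))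
            = ∑ i ∈ range m, e i * (f m * ∑ j ∈ range m, e j * s (2 + i + j)) := by
              rw [Finset.mul_sum]; refine Finset.sum_congr rfl fun i _ => by ring
          _ = ∑ i ∈ range m, e i * ∑ j ∈ range m, g j * s (1 + i + j) := by
              refine Finset.sum_congr rfl fun i hi => ?_
              rw [hinner i (Finset.mem_range.1 hi)]
          _ = ∑ i ∈ range m, ∑ j ∈ range m, g j * (e i * s (1 + j + i)) := by
              refine Finset.sum_congr rfl fun i _ => ?_
              rw [Finset.mul_sum]
              refine Finset.sum_congr rfl fun j _ => ?_
              rw [show 1 + i + j = 1 + j + i from by omega]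
              ring
          _ = ∑ j ∈ range m, g j * ∑ i ∈ range m, e i * s (1 + j + i) := by
              rw [Finset.sum_comm]
              refine Finset.sum_congr rfl fun j _ => ?_
              rw [Finset.mul_sum]
          _ = 0 := by
              refine Finset.sum_eq_zero fun j hj => ?_
              rw [he3 j (Finset.mem_range.1 hj), mul_zero]
      exact (mul_eq_zero.1 hkey).resolve_left hfm
  -- Measure-theoretic step: the polynomial λ·P(λ) vanishes ρ-a.e.
  set F : ℝ → ℝ := fun l => ∑ i ∈ range m, P i * l ^ (1 + i) with hF
  have hFsq : (fun l => F l ^ 2)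
      = fun l => ∑ i ∈ range m, ∑ j ∈ range m, (P i * P j) * l ^ (2 + i + j) := by
    funext l
    rw [sq, hF, Finset.sum_mul_sum]
    refine Finset.sum_congr rfl fun i _ => Finset.sum_congr rfl fun j _ => ?_
    rw [show 2 + i + j = (1 + i) + (1 + j) from by omega, pow_add]
    ring
  have hint : Integrable (fun l => F l ^ 2) ρ := by
    rw [hFsq]
    exact integrable_finset_sum _ fun i _ =>
      integrable_finset_sum _ fun j _ => (hmom (2 + i + j)).const_mul _
  have hI : ∫ l, F l ^ 2 ∂ρ = 0 := by
    rw [hFsq, integral_finset_sum _ fun i _ =>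
      integrable_finset_sum _ fun j _ => (hmom (2 + i + j)).const_mul _]
    rw [show (0:ℝ) = ∑ i ∈ range m, P i * (∑ j ∈ range m, P j * s (2 + i + j)) from hP3.symm]
    refine Finset.sum_congr rfl fun i _ => ?_
    rw [integral_finset_sum _ fun j _ => (hmom (2 + i + j)).const_mul _, Finset.mul_sum]
    refine Finset.sum_congr rfl fun j _ => ?_
    rw [integral_const_mul, ← hs]
    ring
  have hF0 : F =ᵐ[ρ] 0 := by
    have h0 := (integral_eq_zero_iff_of_nonneg (fun l => sq_nonneg (F l)) hint).1 hI
    filter_upwards [h0] with l hl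
    have hl2 : F l ^ 2 = 0 := hl
    show F l = 0
    exact pow_eq_zero_iff (by norm_num : (2:ℕ) ≠ 0) |>.1 hl2
  have horth : ∀ i < m + 1, ∑ j ∈ range m, P j * s (1 + i + j) = 0 := by
    intro i hi
    have e1 : ∫ l, (∑ j ∈ range m, P j * l ^ (1 + i + j)) ∂ρ
        = ∑ j ∈ range m, P j * s (1 + i + j) := by
      rw [integral_finset_sum _ fun j _ => (hmom (1 + i + j)).const_mul _]
      refine Finset.sum_congr rfl fun j _ => ?_
      rw [integral_const_mul, ← hs]
    have e2 : ∫ l, (∑ j ∈ range m, P j * l ^ (1 + i + j)) ∂ρ = 0 := by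
      have hcong : (fun l : ℝ => ∑ j ∈ range m, P j * l ^ (1 + i + j)) =ᵐ[ρ] 0 := by
        filter_upwards [hF0] with l hl
        have hexp : ∑ j ∈ range m, P j * l ^ (1 + i + j) = l ^ i * F l := by
          rw [hF, Finset.mul_sum]
          refine Finset.sum_congr rfl fun j _ => ?_
          rw [show 1 + i + j = i + (1 + j) from by omega, pow_add]
          ring
        have hl' : F l = 0 := hl
        simp [hexp, hl']
      rw [integral_congr_ae hcong]
      simp
    exact e1.symm.trans e2
  -- Matrix step: the Hankel matrix of size m+1 is singular.
  apply hdet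
  refine Matrix.exists_mulVec_eq_zero_iff.1 ⟨fun j : Fin (m + 1) =>
    if (j : ℕ) = 0 then 0 else P ((j : ℕ) - 1), ?_, ?_⟩
  · obtain ⟨i, him, hne⟩ := hP1
    intro h0
    apply hne
    have := congrFun h0 ⟨i + 1, by omega⟩
    simpa using this
  · funext i0
    show ∑ j : Fin (m + 1), (Matrix.of fun i j : Fin (m+1) => s (0 + (i:ℕ) + (j:ℕ))) i0 j
        * (if ((j : Fin (m+1)) : ℕ) = 0 then (0:ℝ) else P ((j : ℕ) - 1)) = 0
    simp only [Matrix.of_apply]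
    rw [Fin.sum_univ_eq_sum_range
      (fun j => s (0 + (i0:ℕ) + j) * (if j = 0 then (0:ℝ) else P (j - 1)))]
    rw [Finset.sum_range_succ']
    have hz : s (0 + (i0:ℕ) + 0) * (if (0:ℕ) = 0 then (0:ℝ) else P (0 - 1)) = 0 := by simp
    rw [hz, add_zero]
    have := horth i0 i0.isLt
    rw [← this]
    refine Finset.sum_congr rfl fun j _ => ?_
    rw [if_neg (Nat.succ_ne_zero j), Nat.add_sub_cancel,
      show 0 + (i0:ℕ) + (j + 1) = 1 + i0 + j from by omega]
    ring

theorem stmt_5 (ρ : Measure ℝ) (s : ℕ → ℝ)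
    (hmom : ∀ j : ℕ, Integrable (fun l : ℝ => l ^ j) ρ)
    (hs : ∀ j : ℕ, s j = ∫ l, l ^ j ∂ρ)
    (k : ℕ) (hk : 1 ≤ k)
    (hpos : ∀ j ≤ k + 1, 0 < hankelDetN s 0 j)
    (hzero : hankelDetN s 1 k = 0) :
    hankelDetN s 1 (k - 1) ≠ 0 ∧ hankelDetN s 1 (k + 1) ≠ 0 := by
  constructor
  · intro h
    by_cases hk2 : 2 ≤ k
    · have hk1 : (k - 1) + 1 = k := by omega
      have hd : hankelDetN s 0 ((k - 1) + 1) ≠ 0 := by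
        rw [hk1]; exact (hpos k (by omega)).ne'
      have hz : hankelDetN s 1 ((k - 1) + 1) = 0 := by rw [hk1]; exact hzero
      exact key ρ s hmom hs (k - 1) (by omega) hd h hz
    · have hk1 : k = 1 := by omega
      subst hk1
      simp [hankelDetN, Matrix.det_fin_zero] at h
  · intro h
    exact key ρ s hmom hs k hk (hpos (k + 1) le_rfl).ne' hzero h
end

section
/- Let s_0, s_1, s_2, ... be real numbers, and define the Hankel determinants Δ_{0,k} = det[(s_{i+j})_{0≤i,j≤k-1}], Δ_{1,k} = det[(s_{1+i+j})_{0≤i,j≤k-1}], and the modified determinant Δ'_{1,k} obtained from Δ_{1,k} by replacing the last column (s_k, s_{k+1}, ..., s_{2k-1})ᵀ with (s_{k+1}, s_{k+2}, ..., s_{2k})ᵀ. Then Δ'_{1,k}·Δ_{0,k} = Δ_{0,k+1}·Δ_{1,k-1} whenever Δ_{1,k} = 0. -/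
/-- The modified Hankel determinant `Δ'_{1,k}`: the Hankel matrix for shift `1`
with the last column shifted by one extra index. -/
noncomputable def hankelDetN' (s : ℕ → ℝ) (k : ℕ) : ℝ :=
  (Matrix.of fun i j : Fin k =>
    if (j : ℕ) = k - 1 then s (2 + (i : ℕ) + (j : ℕ)) else s (1 + (i : ℕ) + (j : ℕ))).det

section Aux

open Matrix Fin


variable {R : Type*} [CommRing R]

/-- Determinant of the identity matrix with two columns replaced. -/
lemma det_one_updateCol_two {N : ℕ} (j j' : Fin N) (hjj : j ≠ j') (u v : Fin N → R) :
    ((((1 : Matrix (Fin N) (Fin N) R).updateCol j u).updateCol j' v)).det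
      = u j * v j' - v j * u j' := by
  classical
  set I : Matrix (Fin N) (Fin N) R := 1 with hI
  set U : Matrix (Fin N) (Fin 2) R :=
    Matrix.of fun a t => if t = 0 then u a - I a j else v a - I a j' with hU
  set V : Matrix (Fin 2) (Fin N) R :=
    Matrix.of fun t b => if t = 0 then I j b else I j' b with hV
  have hM : ((I.updateCol j u).updateCol j' v) = 1 + U * V := by
    ext a b
    simp only [Matrix.add_apply, Matrix.mul_apply, Fin.sum_univ_two, hU, hV, Matrix.of_apply]
    simp only [if_pos rfl, if_neg (one_ne_zero : (1 : Fin 2) ≠ 0)]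
    by_cases hb' : b = j'
    · subst hb'
      rw [Matrix.updateCol_self]
      simp [hI, Matrix.one_apply, hjj]
    · rw [Matrix.updateCol_ne hb']
      by_cases hb : b = j
      · subst hb
        rw [Matrix.updateCol_self]
        simp [hI, Matrix.one_apply, Ne.symm hb']
      · rw [Matrix.updateCol_ne hb]
        simp [hI, Matrix.one_apply, Ne.symm hb, Ne.symm hb']
  rw [hM, Matrix.det_one_add_mul_comm]
  have hVU : (1 : Matrix (Fin 2) (Fin 2) R) + V * U = !![u j, v j; u j', v j'] := by
    ext t t'
    have key : ∀ (c : Fin N) (t' : Fin 2), (∑ b, I c b * U b t') = U c t' := by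
      intro c t'
      rw [Finset.sum_eq_single c]
      · simp [hI, Matrix.one_apply]
      · intro b _ hbc
        simp [hI, Matrix.one_apply, Ne.symm hbc]
      · simp
    fin_cases t <;> fin_cases t' <;>
      simp [Matrix.mul_apply, hV, key, hU, hI, Matrix.one_apply, hjj, Ne.symm hjj]
  rw [hVU, Matrix.det_fin_two_of]


/-- Cofactor expansion: determinant with one column replaced by a basis vector. -/
lemma det_updateColumn_single {m : ℕ} (M : Matrix (Fin (m+1)) (Fin (m+1)) R) (i j : Fin (m+1)) :
    (M.updateCol j (Pi.single i 1)).det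
      = (-1) ^ ((i : ℕ) + (j : ℕ)) * (M.submatrix i.succAbove j.succAbove).det := by
  have h := Matrix.adjugate_fin_succ_eq_det_submatrix Mᵀ i j
  rw [Matrix.adjugate_apply] at h
  have h2 : Mᵀ.updateRow j (Pi.single i 1) = (M.updateCol j (Pi.single i 1))ᵀ := by
    rw [Matrix.updateRow_transpose]
  rw [h2, Matrix.det_transpose] at h
  rw [h, show Mᵀ.submatrix j.succAbove i.succAbove = (M.submatrix i.succAbove j.succAbove)ᵀ from rfl,
    Matrix.det_transpose, Nat.add_comm (j : ℕ) (i : ℕ)]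

lemma submatrix_updateCol_castSucc {m : ℕ} (M : Matrix (Fin (m+1)) (Fin (m+1)) R)
    (c : Fin m) (u : Fin (m+1) → R) (f : Fin m → Fin (m+1)) :
    (M.updateCol c.castSucc u).submatrix f Fin.castSucc
      = (M.submatrix f Fin.castSucc).updateCol c (fun r => u (f r)) := by
  ext a b
  by_cases hb : b = c
  · subst hb; simp
  · rw [Matrix.submatrix_apply, Matrix.updateCol_ne (fun hh => hb (Fin.castSucc_inj.mp hh)),
      Matrix.updateCol_ne hb, Matrix.submatrix_apply]

lemma mul_updateColumn {N : Type*} [Fintype N] [DecidableEq N] (A M : Matrix N N R) (j : N)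
    (u : N → R) :
    A * (M.updateCol j u) = (A * M).updateCol j (A.mulVec u) := by
  ext a b
  by_cases hb : b = j
  · subst hb
    simp [Matrix.mul_apply, Matrix.mulVec, dotProduct]
  · simp [Matrix.mul_apply, Matrix.updateCol_ne hb]

lemma updateCol_comm' {N : Type*} [Fintype N] [DecidableEq N] (M : Matrix N N R) {j j' : N}
    (h : j ≠ j') (u v : N → R) :
    (M.updateCol j u).updateCol j' v = (M.updateCol j' v).updateCol j u := by
  ext a b
  by_cases hb : b = j'
  · subst hb; simp [Matrix.updateCol_ne (Ne.symm h)]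
  · by_cases hb' : b = j
    · subst hb'; simp [Matrix.updateCol_ne hb]
    · simp [Matrix.updateCol_ne hb, Matrix.updateCol_ne hb']

lemma jacobi_mul {n : ℕ} (A : Matrix (Fin (n+2)) (Fin (n+2)) R) :
    A.det * (adjugate A (Fin.castSucc (Fin.last n)) 0 * adjugate A (Fin.last (n+1)) (Fin.last (n+1))
      - adjugate A (Fin.castSucc (Fin.last n)) (Fin.last (n+1)) * adjugate A (Fin.last (n+1)) 0)
    = A.det * (A.det * ((-1 : R)^n
        * (A.submatrix (fun r : Fin n => r.succ.castSucc)
            (fun c : Fin n => c.castSucc.castSucc)).det)) := by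
  classical
  set jn : Fin (n+2) := Fin.castSucc (Fin.last n) with hjn
  set jl : Fin (n+2) := Fin.last (n+1) with hjl
  have hne : jn ≠ jl := ne_of_lt (Fin.castSucc_lt_last (Fin.last n))
  set u : Fin (n+2) → R := fun r => adjugate A r 0 with hu
  set v : Fin (n+2) → R := fun r => adjugate A r jl with hv
  -- step 1 : det E
  have hE : ((((1 : Matrix (Fin (n+2)) (Fin (n+2)) R).updateCol jn u).updateCol jl v)).det
      = adjugate A jn 0 * adjugate A jl jl - adjugate A jn jl * adjugate A jl 0 :=
    det_one_updateCol_two jn jl hne u v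
  -- step 2 : A * E
  have hmulvec : ∀ c : Fin (n+2), A.mulVec (fun r => adjugate A r c) = A.det • (Pi.single c 1 : Fin (n+2) → R) := by
    intro c
    funext r
    have h1 : A.mulVec (fun r => adjugate A r c) r = (A * adjugate A) r c := by
      simp [Matrix.mulVec, Matrix.mul_apply, dotProduct]
    rw [h1, Matrix.mul_adjugate]
    simp [Matrix.smul_apply, Matrix.one_apply, Pi.single_apply]
  have hAE : A * (((1 : Matrix (Fin (n+2)) (Fin (n+2)) R).updateCol jn u).updateCol jl v)
      = (A.updateCol jn (A.det • (Pi.single 0 1 : Fin (n+2) → R))).updateCol jl (A.det • (Pi.single jl 1 : Fin (n+2) → R)) := by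
    rw [mul_updateColumn, mul_updateColumn, Matrix.mul_one, hmulvec, hmulvec]
  -- step 3 : compute det of the RHS of hAE
  have hD3 : ((A.updateCol jn (A.det • (Pi.single 0 1 : Fin (n+2) → R))).updateCol jl
        (A.det • (Pi.single jl 1 : Fin (n+2) → R))).det
      = A.det * (A.det * ((-1 : R)^n
        * (A.submatrix (fun r : Fin n => r.succ.castSucc)
            (fun c : Fin n => c.castSucc.castSucc)).det)) := by
    rw [Matrix.det_updateCol_smul,
      updateCol_comm' _ hne, Matrix.det_updateCol_smul, updateCol_comm' _ (Ne.symm hne)]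
    -- now : A.det * (A.det * det ((A.updateColumn jn (single 0 1)).updateColumn jl (single jl 1)))
    congr 1
    congr 1
    rw [det_updateColumn_single]
    have hsign : ((-1 : R)) ^ ((jl : ℕ) + (jl : ℕ)) = 1 := by
      rw [Even.neg_one_pow ⟨(jl : ℕ), rfl⟩]
    rw [hsign, one_mul]
    have hsa : jl.succAbove = Fin.castSucc := by
      rw [hjl, Fin.succAbove_last]
    rw [hsa, hjn, submatrix_updateCol_castSucc]
    have hsingle : (fun r : Fin (n+1) => (Pi.single 0 1 : Fin (n+2) → R) r.castSucc)
        = (Pi.single 0 1 : Fin (n+1) → R) := by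
      funext r
      simp [Pi.single_apply, Fin.castSucc_eq_zero_iff]
    rw [hsingle, det_updateColumn_single]
    simp only [Fin.val_zero, Fin.val_last, Nat.zero_add, Fin.succAbove_zero, Fin.succAbove_last,
      Matrix.submatrix_submatrix]
    rfl
  calc A.det * _ = A.det * (((1 : Matrix (Fin (n+2)) (Fin (n+2)) R).updateCol jn u).updateCol
          jl v).det := by rw [hE]
    _ = (A * (((1 : Matrix (Fin (n+2)) (Fin (n+2)) R).updateCol jn u).updateCol jl v)).det :=
        (Matrix.det_mul _ _).symm
    _ = _ := by rw [hAE, hD3]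

lemma jacobi {n : ℕ} (A : Matrix (Fin (n+2)) (Fin (n+2)) ℝ) :
    adjugate A (Fin.castSucc (Fin.last n)) 0 * adjugate A (Fin.last (n+1)) (Fin.last (n+1))
      - adjugate A (Fin.castSucc (Fin.last n)) (Fin.last (n+1)) * adjugate A (Fin.last (n+1)) 0
    = A.det * ((-1 : ℝ)^n
        * (A.submatrix (fun r : Fin n => r.succ.castSucc)
            (fun c : Fin n => c.castSucc.castSucc)).det) := by
  let A' := mvPolynomialX (Fin (n+2)) (Fin (n+2)) ℤ
  have key : adjugate A' (Fin.castSucc (Fin.last n)) 0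
        * adjugate A' (Fin.last (n+1)) (Fin.last (n+1))
      - adjugate A' (Fin.castSucc (Fin.last n)) (Fin.last (n+1)) * adjugate A' (Fin.last (n+1)) 0
      = A'.det * ((-1)^n
        * (A'.submatrix (fun r : Fin n => r.succ.castSucc)
            (fun c : Fin n => c.castSucc.castSucc)).det) :=
    mul_left_cancel₀ (det_mvPolynomialX_ne_zero _ ℤ) (jacobi_mul A')
  let φ : MvPolynomial (Fin (n+2) × Fin (n+2)) ℤ →ₐ[ℤ] ℝ :=
    MvPolynomial.aeval fun p : Fin (n+2) × Fin (n+2) => A p.1 p.2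
  have hA : φ.mapMatrix A' = A := mvPolynomialX_mapMatrix_aeval ℤ A
  have hadj : ∀ i j, φ (adjugate A' i j) = adjugate A i j := by
    intro i j
    have h1 : φ (adjugate A' i j) = (φ.mapMatrix (adjugate A')) i j := rfl
    rw [h1, AlgHom.map_adjugate, hA]
  have hdet : φ A'.det = A.det := by
    rw [AlgHom.map_det, hA]
  have hsub : φ (A'.submatrix (fun r : Fin n => r.succ.castSucc)
            (fun c : Fin n => c.castSucc.castSucc)).det
      = (A.submatrix (fun r : Fin n => r.succ.castSucc)
            (fun c : Fin n => c.castSucc.castSucc)).det := by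
    rw [AlgHom.map_det]
    congr 1
    have h2 : φ.mapMatrix (A'.submatrix (fun r : Fin n => r.succ.castSucc)
        (fun c : Fin n => c.castSucc.castSucc))
        = (φ.mapMatrix A').submatrix (fun r : Fin n => r.succ.castSucc)
            (fun c : Fin n => c.castSucc.castSucc) := by
      rw [AlgHom.mapMatrix_apply, AlgHom.mapMatrix_apply, Matrix.submatrix_map]
    rw [h2, hA]
  have := congrArg φ key
  rw [map_sub, _root_.map_mul, _root_.map_mul, _root_.map_mul, _root_.map_mul, map_pow, map_neg, _root_.map_one,
    hadj, hadj, hadj, hadj, hdet, hsub] at this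
  exact this
end Aux

open Matrix Fin in
theorem stmt_6 (s : ℕ → ℝ) (k : ℕ) (hk : 1 ≤ k)
    (h : hankelDetN s 1 k = 0) :
    hankelDetN' s k * hankelDetN s 0 k = hankelDetN s 0 (k + 1) * hankelDetN s 1 (k - 1) := by
  obtain ⟨n, rfl⟩ : ∃ n, k = n + 1 := ⟨k - 1, (Nat.succ_pred_eq_of_pos hk).symm⟩
  set A : Matrix (Fin (n+2)) (Fin (n+2)) ℝ :=
    Matrix.of (fun i j : Fin (n+2) => s (0 + (i : ℕ) + (j : ℕ))) with hA
  have hJ := jacobi A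
  -- the column map for the submatrix appearing in `Δ'`
  have hcol : ∀ j : Fin (n+1), (((Fin.castSucc (Fin.last n)).succAbove j : Fin (n+2)) : ℕ)
      = if (j : ℕ) = n then (j : ℕ) + 1 else (j : ℕ) := by
    intro j
    by_cases hj : (j : ℕ) = n
    · rw [if_pos hj]
      have hjl : j = Fin.last n := Fin.ext (by simpa using hj)
      rw [hjl, Fin.succAbove_of_le_castSucc _ _ (le_refl _), Fin.val_succ, Fin.val_last]
    · rw [if_neg hj, Fin.succAbove_of_castSucc_lt, Fin.coe_castSucc]
      rw [Fin.castSucc_lt_castSucc_iff, Fin.lt_def, Fin.val_last]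
      omega
  have e1 : adjugate A (Fin.castSucc (Fin.last n)) 0 = (-1:ℝ)^n * hankelDetN' s (n+1) := by
    rw [Matrix.adjugate_fin_succ_eq_det_submatrix]
    congr 1
    · simp
    · unfold hankelDetN'
      congr 1
      ext i j
      have hc := hcol j
      simp only [Matrix.submatrix_apply, Matrix.of_apply, Fin.succAbove_zero, hA,
        Nat.add_sub_cancel]
      by_cases hj : (j : ℕ) = n
      · rw [if_pos hj] at hc ⊢
        rw [hc]
        congr 1
        simp [Fin.val_succ]
        omega
      · rw [if_neg hj] at hc ⊢
        rw [hc]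
        congr 1
        simp [Fin.val_succ]
        omega
  have e2 : adjugate A (Fin.last (n+1)) (Fin.last (n+1)) = hankelDetN s 0 (n+1) := by
    rw [Matrix.adjugate_fin_succ_eq_det_submatrix]
    rw [show ((-1:ℝ)) ^ ((Fin.last (n+1) : ℕ) + (Fin.last (n+1) : ℕ)) = 1 from
      Even.neg_one_pow ⟨(Fin.last (n+1) : ℕ), rfl⟩, one_mul]
    unfold hankelDetN
    congr 1
    ext i j
    simp [hA, Fin.succAbove_last]
  have e3 : adjugate A (Fin.last (n+1)) 0 = (-1:ℝ)^(n+1) * hankelDetN s 1 (n+1) := by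
    rw [Matrix.adjugate_fin_succ_eq_det_submatrix]
    congr 1
    · simp
    · unfold hankelDetN
      congr 1
      ext i j
      simp only [Matrix.submatrix_apply, Matrix.of_apply, Fin.succAbove_zero,
        Fin.succAbove_last, hA]
      congr 1
      simp [Fin.val_succ]
      omega
  have e4 : (A.submatrix (fun r : Fin n => r.succ.castSucc)
      (fun c : Fin n => c.castSucc.castSucc)).det = hankelDetN s 1 n := by
    unfold hankelDetN
    congr 1
    ext i j
    simp only [Matrix.submatrix_apply, Matrix.of_apply, hA]
    congr 1
    simp [Fin.val_succ]
    omega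
  have e5 : A.det = hankelDetN s 0 (n+2) := rfl
  rw [e1, e2, e3, e4, e5, h, mul_zero, mul_zero, sub_zero] at hJ
  have hgoal : hankelDetN s 0 (n + 1 + 1) = hankelDetN s 0 (n+2) := rfl
  rw [hgoal, Nat.add_sub_cancel]
  have hpow : ((-1:ℝ)^n) ≠ 0 := pow_ne_zero _ (by norm_num)
  apply mul_left_cancel₀ hpow
  linear_combination hJ
end

section
/- Let m be a Herglotz–Nevanlinna function with integral representation m(z) = a + bz + ∫ (1/(λ−z) − λ/(1+λ²)) dρ(λ). If the moments of ρ exist up to order 2K, then −m(z) = s_{−2}z + s_{−1} + Σ_{k=0}^{2K} s_k z^{−k−1} + o(|z|^{−2K−1}) as |z| → ∞ along the imaginary axis, where s_{−2} = −b, s_{−1} = ∫ λ/(1+λ²) dρ(λ) − a, and s_k = ∫ λ^k dρ(λ). -/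
/-!
Expanding the Cauchy kernel geometrically,
`z ^ (n + 1) * ((λ - z)⁻¹ + ∑_{j ≤ n} λ ^ j / z ^ (j + 1)) = λ ^ (n + 1) / (λ - z)`.
Integrating against `ρ` and cancelling `a`, `b z` and the normalising term `∫ λ / (1 + λ²) dρ`,
the scaled remainder at `z = iη` is `-∫ λ ^ (2K) · λ / (λ - iη) dρ`. Since `|λ / (λ - iη)| ≤ 1`
and `λ / (λ - iη) → 0` pointwise, it tends to `0` by dominated convergence against `|λ| ^ (2K)`.
-/

open MeasureTheory Filter Complex Finset Topology

theorem mul_inv_sub_add_sum_pow_div_pow {𝕜 : Type*} [Field 𝕜] {x z : 𝕜} (hz : z ≠ 0)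
    (hxz : x - z ≠ 0) (n : ℕ) :
    z ^ n * ((x - z)⁻¹ + ∑ j ∈ range n, x ^ j / z ^ (j + 1)) = x ^ n / (x - z) := by
  induction n with
  | zero => simp
  | succ n ih =>
    calc z ^ (n + 1) * ((x - z)⁻¹ + ∑ j ∈ range (n + 1), x ^ j / z ^ (j + 1))
        = z * (z ^ n * ((x - z)⁻¹ + ∑ j ∈ range n, x ^ j / z ^ (j + 1))) + x ^ n := by
          rw [sum_range_succ]
          field_simp
          ring
      _ = x ^ (n + 1) / (x - z) := by
          rw [ih]
          field_simp
          ring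

theorem abs_im_le_norm_ofReal_sub (l : ℝ) (z : ℂ) : |z.im| ≤ ‖(l : ℂ) - z‖ := by
  simpa using abs_im_le_norm ((l : ℂ) - z)

theorem ofReal_sub_ne_zero {z : ℂ} (hz : z.im ≠ 0) (l : ℝ) : (l : ℂ) - z ≠ 0 := fun h =>
  hz (by simpa using congrArg im h)

section MeasureOnReal

variable {ρ : Measure ℝ}

theorem integrable_ofReal_pow {n : ℕ} (h : Integrable (fun l : ℝ => |l| ^ n) ρ) :
    Integrable (fun l : ℝ => (l : ℂ) ^ n) ρ :=
  (integrable_norm_iff (by fun_prop)).1 (by simpa using h)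

theorem tendsto_integral_mul_div_ofReal_sub_I_mul_atTop {g : ℝ → ℂ} (hg : Integrable g ρ) :
    Tendsto (fun η : ℝ => ∫ l : ℝ, g l * ((l : ℂ) / ((l : ℂ) - I * η)) ∂ρ) atTop (𝓝 0) := by
  have hle_one : ∀ l η : ℝ, ‖(l : ℂ) / ((l : ℂ) - I * η)‖ ≤ 1 := fun l η => by
    rw [norm_div, norm_real, Real.norm_eq_abs]
    exact div_le_one_of_le₀ (by simpa using abs_re_le_norm ((l : ℂ) - I * η)) (norm_nonneg _)
  have hlim : ∀ l : ℝ, Tendsto (fun η : ℝ => (l : ℂ) / ((l : ℂ) - I * η)) atTop (𝓝 0) := by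
    intro l
    refine squeeze_zero_norm' ?_ (tendsto_const_nhds.div_atTop tendsto_id (a := |l|))
    filter_upwards [eventually_gt_atTop 0] with η hη
    rw [norm_div, norm_real, Real.norm_eq_abs]
    exact div_le_div_of_nonneg_left (abs_nonneg l) hη
      (by simpa [abs_of_pos hη] using abs_im_le_norm_ofReal_sub l (I * η))
  have hdom := tendsto_integral_filter_of_dominated_convergence (l := atTop) (μ := ρ)
    (F := fun (η : ℝ) l => g l * ((l : ℂ) / ((l : ℂ) - I * η))) (f := fun _ => 0)
    (fun l => ‖g l‖) (Eventually.of_forall fun η => hg.aestronglyMeasurable.mul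
      (by fun_prop : Measurable fun l : ℝ => (l : ℂ) / ((l : ℂ) - I * η)).aestronglyMeasurable)
    (Eventually.of_forall fun η => ae_of_all _ fun l => by
      rw [norm_mul]
      exact mul_le_of_le_one_right (norm_nonneg _) (hle_one l η))
    hg.norm (ae_of_all _ fun l => by simpa using (hlim l).const_mul (g l))
  simpa using hdom

variable [IsFiniteMeasure ρ]

theorem integrable_inv_ofReal_sub {z : ℂ} (hz : z.im ≠ 0) :
    Integrable (fun l : ℝ => ((l : ℂ) - z)⁻¹) ρ := by
  refine Integrable.of_bound
    ((continuous_ofReal.sub continuous_const).inv₀ (ofReal_sub_ne_zero hz)).aestronglyMeasurable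
    |z.im|⁻¹ (ae_of_all _ fun l => ?_)
  rw [norm_inv]
  exact inv_anti₀ (abs_pos.2 hz) (abs_im_le_norm_ofReal_sub l z)

theorem integrable_div_one_add_sq : Integrable (fun l : ℝ => l / (1 + l ^ 2)) ρ := by
  refine Integrable.of_bound
    (continuous_id.div (by fun_prop) fun l => by positivity).aestronglyMeasurable 1
    (ae_of_all _ fun l => ?_)
  rw [norm_div, Real.norm_eq_abs, Real.norm_of_nonneg (by positivity)]
  exact div_le_one_of_le₀ (by nlinarith [sq_abs l, sq_nonneg (|l| - 1)]) (by positivity)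

theorem integral_inv_sub_sub_div_one_add_sq {z : ℂ} (hz : z.im ≠ 0) :
    ∫ l : ℝ, (((l : ℂ) - z)⁻¹ - (l : ℂ) / (1 + (l : ℂ) ^ 2)) ∂ρ =
      (∫ l : ℝ, ((l : ℂ) - z)⁻¹ ∂ρ) - ((∫ l : ℝ, l / (1 + l ^ 2) ∂ρ : ℝ) : ℂ) := by
  have hcast : (fun l : ℝ => (l : ℂ) / (1 + (l : ℂ) ^ 2)) =
      fun l : ℝ => ((l / (1 + l ^ 2) : ℝ) : ℂ) := by
    ext l
    push_cast
    rfl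
  rw [integral_sub (integrable_inv_ofReal_sub hz)
      (by rw [hcast]; exact integrable_div_one_add_sq.ofReal), hcast, integral_complex_ofReal]

theorem pow_mul_integral_inv_sub_add_sum_moments {n : ℕ}
    (hmom : ∀ j ≤ n, Integrable (fun l : ℝ => |l| ^ j) ρ) {z : ℂ} (hz : z.im ≠ 0) :
    z ^ (n + 1) * ((∫ l : ℝ, ((l : ℂ) - z)⁻¹ ∂ρ) +
        ∑ j ∈ range (n + 1), ((∫ l : ℝ, l ^ j ∂ρ : ℝ) : ℂ) / z ^ (j + 1)) =
      ∫ l : ℝ, (l : ℂ) ^ n * ((l : ℂ) / ((l : ℂ) - z)) ∂ρ := by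
  have hz0 : z ≠ 0 := fun h => hz (by simp [h])
  have hterm : ∀ j ∈ range (n + 1), Integrable (fun l : ℝ => (l : ℂ) ^ j / z ^ (j + 1)) ρ :=
    fun j hj => (integrable_ofReal_pow (hmom j (Nat.lt_succ_iff.1 (mem_range.1 hj)))).div_const _
  have hmoment : ∀ j : ℕ, ((∫ l : ℝ, l ^ j ∂ρ : ℝ) : ℂ) / z ^ (j + 1) =
      ∫ l : ℝ, (l : ℂ) ^ j / z ^ (j + 1) ∂ρ := fun j => by
    rw [integral_div, ← integral_complex_ofReal]
    push_cast
    rfl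
  calc z ^ (n + 1) * ((∫ l : ℝ, ((l : ℂ) - z)⁻¹ ∂ρ) +
          ∑ j ∈ range (n + 1), ((∫ l : ℝ, l ^ j ∂ρ : ℝ) : ℂ) / z ^ (j + 1))
      = ∫ l : ℝ, z ^ (n + 1) *
          (((l : ℂ) - z)⁻¹ + ∑ j ∈ range (n + 1), (l : ℂ) ^ j / z ^ (j + 1)) ∂ρ := by
        simp_rw [hmoment]
        rw [integral_const_mul, integral_add (integrable_inv_ofReal_sub hz)
          (integrable_finsetSum _ hterm), integral_finsetSum _ hterm]
    _ = ∫ l : ℝ, (l : ℂ) ^ n * ((l : ℂ) / ((l : ℂ) - z)) ∂ρ := by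
        refine integral_congr_ae (ae_of_all _ fun l => ?_)
        dsimp only
        rw [mul_inv_sub_add_sum_pow_div_pow hz0 (ofReal_sub_ne_zero hz l)]
        ring

end MeasureOnReal

theorem stmt_8_general (m : ℂ → ℂ) (a b : ℝ) (ρ : Measure ℝ) (K : ℕ)
    (hrep : ∀ z : ℂ, z.im ≠ 0 →
      m z = (a : ℂ) + (b : ℂ) * z +
        ∫ l : ℝ, (((l : ℂ) - z)⁻¹ - (l : ℂ) / (1 + (l : ℂ) ^ 2)) ∂ρ)
    (hmom : ∀ j ≤ 2 * K, Integrable (fun l : ℝ => |l| ^ j) ρ) :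
    Tendsto (fun η : ℝ =>
      (Complex.I * (η : ℂ)) ^ (2 * K + 1) *
        (-(m (Complex.I * (η : ℂ))) -
          (((-b : ℝ) : ℂ) * (Complex.I * (η : ℂ)) +
            (((∫ l : ℝ, l / (1 + l ^ 2) ∂ρ) - a : ℝ) : ℂ) +
            ∑ j ∈ Finset.range (2 * K + 1),
              ((∫ l : ℝ, l ^ j ∂ρ : ℝ) : ℂ) / (Complex.I * (η : ℂ)) ^ (j + 1))))
      atTop (nhds 0) := by
  have : IsFiniteMeasure ρ :=
    (integrable_const_iff_isFiniteMeasure one_ne_zero).1 (by simpa using hmom 0 (Nat.zero_le _))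
  have hrem := (tendsto_integral_mul_div_ofReal_sub_I_mul_atTop
    (integrable_ofReal_pow (hmom (2 * K) le_rfl)) (ρ := ρ)).neg
  rw [neg_zero] at hrem
  refine hrem.congr' ?_
  filter_upwards [eventually_gt_atTop 0] with η hη
  have hz : (I * η).im ≠ 0 := by simpa using hη.ne'
  rw [hrep _ hz, integral_inv_sub_sub_div_one_add_sq hz,
    ← pow_mul_integral_inv_sub_add_sum_moments hmom hz]
  push_cast
  ring

theorem stmt_8 (m : ℂ → ℂ) (a b : ℝ) (hb : 0 ≤ b) (ρ : Measure ℝ) (K : ℕ)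
    (hgrow : Integrable (fun l : ℝ => 1 / (1 + l ^ 2)) ρ)
    (hherglotz : (∀ z : ℂ, 0 < z.im → 0 ≤ (m z).im) ∧
      ∀ z : ℂ, z.im ≠ 0 → m (starRingEnd ℂ z) = starRingEnd ℂ (m z))
    (hrep : ∀ z : ℂ, z.im ≠ 0 →
      m z = (a : ℂ) + (b : ℂ) * z +
        ∫ l : ℝ, (((l : ℂ) - z)⁻¹ - (l : ℂ) / (1 + (l : ℂ) ^ 2)) ∂ρ)
    (hmom : ∀ j ≤ 2 * K, Integrable (fun l : ℝ => |l| ^ j) ρ) :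
    Tendsto (fun η : ℝ =>
      (Complex.I * (η : ℂ)) ^ (2 * K + 1) *
        (-(m (Complex.I * (η : ℂ))) -
          (((-b : ℝ) : ℂ) * (Complex.I * (η : ℂ)) +
            (((∫ l : ℝ, l / (1 + l ^ 2) ∂ρ) - a : ℝ) : ℂ) +
            ∑ j ∈ Finset.range (2 * K + 1),
              ((∫ l : ℝ, l ^ j ∂ρ : ℝ) : ℂ) / (Complex.I * (η : ℂ)) ^ (j + 1))))
      atTop (nhds 0) :=
  stmt_8_general m a b ρ K hrep hmom
end

section
/- Let ρ be a non-negative Borel measure on ℝ with ∫ dρ(λ)/(1+λ²) < ∞, and let K ∈ ℕ₀. If the function z ↦ ∫ 1/(λ−z) dρ(λ) admits an asymptotic expansion of the form −∫ 1/(λ−z) dρ(λ) = Σ_{k=0}^{2K} c_k z^{−k−1} + o(|z|^{−2K−1}) as |z| → ∞ along the imaginary axis for some real constants c_0, ..., c_{2K}, then the moments ∫ |λ|^k dρ(λ) are finite for all k ≤ 2K and c_k = ∫ λ^k dρ(λ). -/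
open MeasureTheory Filter Complex


lemma intC (ρ : Measure ℝ) (j : ℕ) (h : Integrable (fun l : ℝ => |l| ^ j) ρ) :
    Integrable (fun l : ℝ => ((l:ℂ)) ^ j) ρ := by
  have hm : AEStronglyMeasurable (fun l : ℝ => ((l:ℂ)) ^ j) ρ :=
    (Complex.continuous_ofReal.pow j).aestronglyMeasurable
  rw [← integrable_norm_iff hm]
  simpa [Complex.norm_real] using h

lemma geom_id (z w : ℂ) (hz : z ≠ 0) (hzw : z - w ≠ 0) (r : ℕ) :
    (z - w)⁻¹ = (∑ j ∈ Finset.range r, w^j / z^(j+1)) + w^r / (z^r * (z - w)) := by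
  induction r with
  | zero => simp
  | succ r ih =>
    rw [Finset.sum_range_succ, ih]
    have h1 : w ^ r / (z ^ r * (z - w)) = w ^ r / z ^ (r+1) + w ^ (r+1) / (z ^ (r+1) * (z - w)) := by
      field_simp
      ring
    rw [h1]; ring

lemma inv_form (η l : ℝ) (hη : 0 < η) :
    ((Complex.I*(η:ℂ)) - (l:ℂ))⁻¹ = (-(l:ℂ) - Complex.I*η) / (((l^2+η^2 : ℝ)):ℂ) := by
  have hd : ((l^2+η^2 : ℝ) : ℂ) ≠ 0 := by
    exact_mod_cast (by positivity : ((l:ℝ)^2+η^2 : ℝ) ≠ 0)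
  have hzw : (Complex.I*(η:ℂ)) - (l:ℂ) ≠ 0 := by
    intro h; have := congrArg Complex.im h; simp at this; exact hη.ne' this
  rw [eq_div_iff hd, inv_mul_eq_div, div_eq_iff hzw]
  push_cast
  ring_nf
  rw [Complex.I_sq]
  ring

lemma re_aux (η l : ℝ) (hη : 0 < η) (r p : ℕ) (hp : p = 1 ∨ p = 2) :
    ((Complex.I*(η:ℂ))^p * (l:ℂ)^r * ((Complex.I*(η:ℂ)) - (l:ℂ))⁻¹).re
      = l^(r+p-1) * η^2/(l^2+η^2) := by
  rw [inv_form η l hη, mul_div_assoc', Complex.div_ofReal_re]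
  rcases hp with h | h <;> subst h <;>
  · congr 1
    simp [Complex.mul_re, Complex.mul_im, ← Complex.ofReal_pow, Complex.I_sq, pow_succ]
    ring

lemma Tre (ρ : Measure ℝ) (c : ℕ → ℝ) (n r p : ℕ)
    (hp : p = 1 ∨ p = 2) (hrp : n + 1 = r + p)
    (hintC : ∀ z : ℂ, z.im ≠ 0 → Integrable (fun l : ℝ => ((l : ℂ) - z)⁻¹) ρ)
    (hm : ∀ j < r, Integrable (fun l : ℝ => |l| ^ j) ρ ∧ c j = ∫ l : ℝ, l ^ j ∂ρ)
    (η : ℝ) (hη : 1 ≤ η) :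
    Integrable (fun l : ℝ => l ^ n * η^2 / (l^2 + η^2)) ρ ∧
    ((Complex.I * (η : ℂ)) ^ (n + 1) *
        (-(∫ l : ℝ, ((l : ℂ) - Complex.I * (η : ℂ))⁻¹ ∂ρ) -
          ∑ j ∈ Finset.range (n + 1),
            ((c j : ℝ) : ℂ) / (Complex.I * (η : ℂ)) ^ (j + 1))).re
      = (∫ l : ℝ, l ^ n * η^2 / (l^2 + η^2) ∂ρ) - c n := by
  have hηpos : (0:ℝ) < η := by linarith
  set z : ℂ := Complex.I * (η:ℂ) with hzdef
  have hz0 : z ≠ 0 := by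
    intro h; have := congrArg Complex.im h; simp [hzdef] at this; exact hηpos.ne' this
  have hzw : ∀ l : ℝ, z - (l:ℂ) ≠ 0 := by
    intro l h; have := congrArg Complex.im h; simp [hzdef] at this; exact hηpos.ne' this
  have hFint : Integrable (fun l : ℝ => ((l:ℂ) - z)⁻¹) ρ := by
    apply hintC; simp [hzdef]; exact hηpos.ne'
  have hFint' : Integrable (fun l : ℝ => (z - (l:ℂ))⁻¹) ρ := by
    apply hFint.neg.congr
    filter_upwards with l
    simp only [Pi.neg_apply]
    rw [← inv_neg, neg_sub]
  have hsum_int : Integrable (fun l : ℝ => ∑ j ∈ Finset.range r, ((l:ℂ))^j / z^(j+1)) ρ := by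
    apply integrable_finset_sum
    intro j hj
    exact (intC ρ j (hm j (Finset.mem_range.mp hj)).1).div_const _
  set g : ℝ → ℂ := fun l => ((l:ℂ))^r / (z^r * (z - (l:ℂ))) with hgdef
  have hgpt : ∀ l : ℝ, g l = (z - (l:ℂ))⁻¹ - ∑ j ∈ Finset.range r, ((l:ℂ))^j / z^(j+1) := by
    intro l
    rw [hgdef]
    simp only []
    rw [geom_id z (l:ℂ) hz0 (hzw l) r]
    ring
  have hgint : Integrable g ρ := by
    apply (hFint'.sub hsum_int).congr
    filter_upwards with l
    simp only [Pi.sub_apply]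
    rw [hgpt l]
  -- integral identity
  have hint_id : (∫ l : ℝ, (z - (l:ℂ))⁻¹ ∂ρ)
      = (∑ j ∈ Finset.range r, ((c j : ℝ):ℂ) / z^(j+1)) + ∫ l : ℝ, g l ∂ρ := by
    have heq : (fun l : ℝ => (z - (l:ℂ))⁻¹)
        = fun l : ℝ => (∑ j ∈ Finset.range r, ((l:ℂ))^j / z^(j+1)) + g l := by
      funext l; rw [hgpt l]; ring
    rw [heq, integral_add hsum_int hgint, integral_finset_sum _
      (fun j hj => (intC ρ j (hm j (Finset.mem_range.mp hj)).1).div_const _)]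
    congr 1
    apply Finset.sum_congr rfl
    intro j hj
    rw [integral_div]
    congr 1
    have h1 : (fun l : ℝ => ((l:ℂ))^j) = fun l : ℝ => (((l^j : ℝ)):ℂ) := by
      funext l; push_cast; ring
    have h2 : ∫ l:ℝ, ((l^j:ℝ):ℂ) ∂ρ = ((∫ l:ℝ, l^j ∂ρ : ℝ) : ℂ) := integral_ofReal
    rw [h1, h2, (hm j (Finset.mem_range.mp hj)).2]
  -- the W integral
  have hWpt : ∀ l : ℝ, z^(n+1) * g l = z^p * ((l:ℂ))^r * (z - (l:ℂ))⁻¹ := by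
    intro l
    rw [hgdef]
    simp only []
    rw [hrp, pow_add]
    rw [div_eq_mul_inv, mul_inv]
    have hzr : (z^r)⁻¹ * z^r = 1 := inv_mul_cancel₀ (pow_ne_zero _ hz0)
    calc z ^ r * z ^ p * (↑l ^ r * ((z ^ r)⁻¹ * (z - ↑l)⁻¹))
        = ((z^r)⁻¹ * z^r) * (z ^ p * ↑l ^ r * (z - ↑l)⁻¹) := by ring
      _ = z ^ p * ↑l ^ r * (z - ↑l)⁻¹ := by rw [hzr, one_mul]
  have hWint : Integrable (fun l : ℝ => z^p * ((l:ℂ))^r * (z - (l:ℂ))⁻¹) ρ := by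
    apply (hgint.const_mul (z^(n+1))).congr
    filter_upwards with l
    rw [hWpt l]
  have hre_pt : ∀ l : ℝ, (z^p * ((l:ℂ))^r * (z - (l:ℂ))⁻¹).re = l^n * η^2/(l^2+η^2) := by
    intro l
    have h3 := re_aux η l hηpos r p hp
    rw [show r + p - 1 = n from by omega] at h3
    rw [hzdef]
    rw [h3]
  have hre_int : Integrable (fun l : ℝ => l ^ n * η^2 / (l^2 + η^2)) ρ := by
    apply hWint.re.congr
    filter_upwards with l
    rw [RCLike.re_to_complex, hre_pt l]
  refine ⟨hre_int, ?_⟩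
  -- compute W and its re
  have hW : z^(n+1) * (∫ l : ℝ, g l ∂ρ) = ∫ l : ℝ, z^p * ((l:ℂ))^r * (z - (l:ℂ))⁻¹ ∂ρ := by
    rw [← integral_const_mul]
    apply integral_congr_ae
    filter_upwards with l
    rw [hWpt l]
  have hWre : (z^(n+1) * (∫ l : ℝ, g l ∂ρ)).re = ∫ l : ℝ, l ^ n * η^2 / (l^2 + η^2) ∂ρ := by
    rw [hW, ← RCLike.re_to_complex, ← integral_re hWint]
    apply integral_congr_ae
    filter_upwards with l
    rw [RCLike.re_to_complex, hre_pt l]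
  -- split the c-sum
  have hrn : r ≤ n := by omega
  have hsplit : (∑ j ∈ Finset.range (n+1), ((c j:ℝ):ℂ)/z^(j+1))
      = (∑ j ∈ Finset.range r, ((c j:ℝ):ℂ)/z^(j+1))
        + ∑ j ∈ Finset.Ico r (n+1), ((c j:ℝ):ℂ)/z^(j+1) := by
    rw [Finset.range_eq_Ico, ← Finset.sum_Ico_consecutive _ (Nat.zero_le _) (by omega : r ≤ n+1),
      ← Finset.range_eq_Ico]
  have hnegF : -(∫ l : ℝ, ((l:ℂ) - z)⁻¹ ∂ρ) = ∫ l : ℝ, (z - (l:ℂ))⁻¹ ∂ρ := by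
    rw [← integral_neg]
    apply integral_congr_ae
    filter_upwards with l
    rw [← inv_neg, neg_sub]
  -- main algebraic identity for T
  have hT_eq : z ^ (n + 1) *
        (-(∫ l : ℝ, ((l : ℂ) - z)⁻¹ ∂ρ) - ∑ j ∈ Finset.range (n + 1), ((c j : ℝ) : ℂ) / z ^ (j + 1))
      = z^(n+1) * (∫ l : ℝ, g l ∂ρ)
        - z^(n+1) * ∑ j ∈ Finset.Ico r (n+1), ((c j:ℝ):ℂ)/z^(j+1) := by
    rw [hnegF, hint_id, hsplit]
    ring
  rw [hT_eq]
  rw [Complex.sub_re, hWre]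
  congr 1
  -- re of the tail term equals c n
  rcases hp with hp1 | hp2
  · subst hp1
    have hrn' : r = n := by omega
    subst hrn'
    rw [show Finset.Ico r (r+1) = {r} from Nat.Ico_succ_singleton r]
    rw [Finset.sum_singleton]
    rw [mul_div_cancel₀ _ (pow_ne_zero _ hz0)]
    exact Complex.ofReal_re _
  · subst hp2
    have hrn' : n = r + 1 := by omega
    subst hrn'
    rw [show Finset.Ico r (r+1+1) = {r, r+1} by
      ext x
      simp [Finset.mem_Ico]
      omega]
    rw [Finset.sum_insert (by simp)]
    rw [Finset.sum_singleton]
    have hcalc : z^(r+1+1) * (((c r:ℝ):ℂ)/z^(r+1) + ((c (r+1):ℝ):ℂ)/z^(r+1+1))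
        = ((c r:ℝ):ℂ) * z + ((c (r+1):ℝ):ℂ) := by
      field_simp
      ring
    rw [hcalc]
    rw [Complex.add_re, Complex.ofReal_re]
    have : (((c r:ℝ):ℂ) * z).re = 0 := by
      rw [hzdef]
      simp [Complex.mul_re]
    rw [this, zero_add]

lemma T0 (ρ : Measure ℝ) (K : ℕ) (c : ℕ → ℝ)
    (hasym : Tendsto (fun η : ℝ =>
        (Complex.I * (η : ℂ)) ^ (2 * K + 1) *
          (-(∫ l : ℝ, ((l : ℂ) - Complex.I * (η : ℂ))⁻¹ ∂ρ) -
            ∑ j ∈ Finset.range (2 * K + 1),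
              ((c j : ℝ) : ℂ) / (Complex.I * (η : ℂ)) ^ (j + 1)))
      atTop (nhds 0)) (n : ℕ) (hn : n ≤ 2 * K) :
    Tendsto (fun η : ℝ =>
        (Complex.I * (η : ℂ)) ^ (n + 1) *
          (-(∫ l : ℝ, ((l : ℂ) - Complex.I * (η : ℂ))⁻¹ ∂ρ) -
            ∑ j ∈ Finset.range (n + 1),
              ((c j : ℝ) : ℂ) / (Complex.I * (η : ℂ)) ^ (j + 1)))
      atTop (nhds 0) := by
  have hnorm : ∀ η : ℝ, 0 ≤ η → ‖Complex.I * (η:ℂ)‖ = η := by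
    intro η hη
    simp only [norm_mul, Complex.norm_I, one_mul, Complex.norm_real, Real.norm_eq_abs]
    exact _root_.abs_of_nonneg hη
  -- first piece
  have h1 : Tendsto (fun η : ℝ => (Complex.I * (η:ℂ)) ^ (n + 1) *
      (-(∫ l : ℝ, ((l : ℂ) - Complex.I * (η : ℂ))⁻¹ ∂ρ) -
        ∑ j ∈ Finset.range (2 * K + 1), ((c j : ℝ) : ℂ) / (Complex.I * (η : ℂ)) ^ (j + 1)))
      atTop (nhds 0) := by
    apply squeeze_zero_norm' (a := fun η : ℝ => ‖(Complex.I * (η:ℂ)) ^ (2 * K + 1) *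
      (-(∫ l : ℝ, ((l : ℂ) - Complex.I * (η : ℂ))⁻¹ ∂ρ) -
        ∑ j ∈ Finset.range (2 * K + 1), ((c j : ℝ) : ℂ) / (Complex.I * (η : ℂ)) ^ (j + 1))‖)
    · filter_upwards [eventually_ge_atTop (1 : ℝ)] with η hη
      rw [norm_mul, norm_mul, norm_pow, norm_pow, hnorm η (by linarith)]
      have : η ^ (n + 1) ≤ η ^ (2 * K + 1) := pow_le_pow_right₀ hη (by omega)
      exact mul_le_mul_of_nonneg_right this (norm_nonneg _)
    · have := hasym.norm
      rw [norm_zero] at this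
      exact this
  -- second piece
  have h2 : Tendsto (fun η : ℝ => ∑ j ∈ Finset.Ico (n + 1) (2 * K + 1),
      ((c j : ℝ) : ℂ) * (Complex.I * (η:ℂ)) ^ (n + 1) / (Complex.I * (η:ℂ)) ^ (j + 1))
      atTop (nhds 0) := by
    have h0 : (0 : ℂ) = ∑ j ∈ Finset.Ico (n + 1) (2 * K + 1), (0 : ℂ) := by simp
    rw [h0]
    apply tendsto_finset_sum
    intro j hj
    rw [Finset.mem_Ico] at hj
    apply squeeze_zero_norm' (a := fun η => ‖c j‖ / η)
    · filter_upwards [eventually_ge_atTop (1 : ℝ)] with η hη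
      have hηpos : (0:ℝ) < η := by linarith
      rw [norm_div, norm_mul, norm_pow, norm_pow, hnorm η hηpos.le, Complex.norm_real]
      calc ‖c j‖ * η ^ (n+1) / η ^ (j+1) ≤ ‖c j‖ * η ^ (n+1) / (η ^ (n+1) * η) := by
            apply div_le_div_of_nonneg_left (by positivity) (by positivity)
            calc η ^ (n+1) * η = η ^ (n+2) := by ring
              _ ≤ η ^ (j+1) := pow_le_pow_right₀ hη (by omega)
        _ = ‖c j‖ / η := by
            field_simp
    · exact Tendsto.div_atTop tendsto_const_nhds tendsto_id
  have hcomb := h1.add h2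
  rw [add_zero] at hcomb
  apply hcomb.congr
  intro η
  have hsplit : (∑ j ∈ Finset.range (2*K+1), ((c j:ℝ):ℂ)/(Complex.I * (η:ℂ))^(j+1))
      = (∑ j ∈ Finset.range (n+1), ((c j:ℝ):ℂ)/(Complex.I * (η:ℂ))^(j+1))
        + ∑ j ∈ Finset.Ico (n+1) (2*K+1), ((c j:ℝ):ℂ)/(Complex.I * (η:ℂ))^(j+1) := by
    rw [Finset.range_eq_Ico, ← Finset.sum_Ico_consecutive _ (Nat.zero_le _) (by omega : n+1 ≤ 2*K+1),
      ← Finset.range_eq_Ico]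
  have e1 : (Complex.I * (η:ℂ))^(n+1) * (∑ j ∈ Finset.Ico (n+1) (2*K+1), ((c j:ℝ):ℂ)/(Complex.I * (η:ℂ))^(j+1))
      = ∑ j ∈ Finset.Ico (n+1) (2*K+1), ((c j:ℝ):ℂ) * (Complex.I * (η:ℂ))^(n+1)/(Complex.I * (η:ℂ))^(j+1) := by
    rw [Finset.mul_sum]
    exact Finset.sum_congr rfl (fun j _ => by ring)
  rw [hsplit, ← e1]
  ring

-- pointwise limit
lemma ptlim (l : ℝ) (n : ℕ) :
    Tendsto (fun η : ℝ => l^n * η^2 / (l^2 + η^2)) atTop (nhds (l^n)) := by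
  have h1 : Tendsto (fun η : ℝ => l^2 / η^2) atTop (nhds 0) :=
    Tendsto.div_atTop tendsto_const_nhds (tendsto_pow_atTop (by norm_num))
  have h2 : Tendsto (fun η : ℝ => (l^2 / η^2 + 1)⁻¹) atTop (nhds 1) := by
    have := ((h1.add_const 1).inv₀ (by norm_num))
    simpa using this
  have h3 : Tendsto (fun η : ℝ => l^n * (l^2 / η^2 + 1)⁻¹) atTop (nhds (l^n)) := by
    simpa using h2.const_mul (l^n)
  apply h3.congr'
  filter_upwards [eventually_ge_atTop (1:ℝ)] with η hη
  have hηpos : (0:ℝ) < η := by linarith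
  rw [mul_div_assoc]
  congr 1
  rw [inv_eq_one_div, div_eq_div_iff (by positivity) (by positivity)]
  field_simp

lemma star_lim (ρ : Measure ℝ) (K : ℕ) (c : ℕ → ℝ)
    (hintC : ∀ z : ℂ, z.im ≠ 0 → Integrable (fun l : ℝ => ((l : ℂ) - z)⁻¹) ρ)
    (hasym : Tendsto (fun η : ℝ =>
        (Complex.I * (η : ℂ)) ^ (2 * K + 1) *
          (-(∫ l : ℝ, ((l : ℂ) - Complex.I * (η : ℂ))⁻¹ ∂ρ) -
            ∑ j ∈ Finset.range (2 * K + 1),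
              ((c j : ℝ) : ℂ) / (Complex.I * (η : ℂ)) ^ (j + 1)))
      atTop (nhds 0))
    (n r p : ℕ) (hp : p = 1 ∨ p = 2) (hrp : n + 1 = r + p) (hn : n ≤ 2 * K)
    (hm : ∀ j < r, Integrable (fun l : ℝ => |l| ^ j) ρ ∧ c j = ∫ l : ℝ, l ^ j ∂ρ) :
    (∀ η : ℝ, 1 ≤ η → Integrable (fun l : ℝ => l ^ n * η^2 / (l^2 + η^2)) ρ) ∧
    Tendsto (fun η : ℝ => ∫ l : ℝ, l ^ n * η^2 / (l^2 + η^2) ∂ρ) atTop (nhds (c n)) := by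
  refine ⟨fun η hη => (Tre ρ c n r p hp hrp hintC hm η hη).1, ?_⟩
  have hT := T0 ρ K c hasym n hn
  have hTre : Tendsto (fun η : ℝ =>
      ((Complex.I * (η : ℂ)) ^ (n + 1) *
        (-(∫ l : ℝ, ((l : ℂ) - Complex.I * (η : ℂ))⁻¹ ∂ρ) -
          ∑ j ∈ Finset.range (n + 1),
            ((c j : ℝ) : ℂ) / (Complex.I * (η : ℂ)) ^ (j + 1))).re)
      atTop (nhds 0) := by
    exact (Complex.continuous_re.tendsto 0).comp hT
  have h2 : Tendsto (fun η : ℝ => (∫ l : ℝ, l ^ n * η^2 / (l^2 + η^2) ∂ρ) - c n)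
      atTop (nhds 0) := by
    apply hTre.congr'
    filter_upwards [eventually_ge_atTop (1:ℝ)] with η hη
    exact (Tre ρ c n r p hp hrp hintC hm η hη).2
  have h3 := h2.add_const (c n)
  rw [zero_add] at h3
  apply h3.congr
  intro η
  ring

lemma dct_step (ρ : Measure ℝ) (c : ℕ → ℝ) (n : ℕ)
    (hint : Integrable (fun l : ℝ => |l| ^ n) ρ)
    (htend : Tendsto (fun η : ℝ => ∫ l : ℝ, l ^ n * η^2 / (l^2 + η^2) ∂ρ)
      atTop (nhds (c n))) :
    c n = ∫ l : ℝ, l ^ n ∂ρ := by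
  have hdct : Tendsto (fun η : ℝ => ∫ l : ℝ, l ^ n * η^2 / (l^2 + η^2) ∂ρ)
      atTop (nhds (∫ l : ℝ, l ^ n ∂ρ)) := by
    apply tendsto_integral_filter_of_dominated_convergence (bound := fun l : ℝ => |l| ^ n)
    · filter_upwards with η
      exact (((measurable_id.pow_const n).mul_const _).div
        ((measurable_id.pow_const 2).add_const _)).aestronglyMeasurable
    · filter_upwards [eventually_ge_atTop (1:ℝ)] with η hη
      filter_upwards with l
      have hηpos : (0:ℝ) < η := by linarith
      rw [Real.norm_eq_abs, abs_div, abs_mul, _root_.abs_pow l n,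
        _root_.abs_of_nonneg (sq_nonneg η), _root_.abs_of_pos (by positivity : (0:ℝ) < l^2 + η^2)]
      rw [div_le_iff₀ (by positivity)]
      nlinarith [pow_nonneg (abs_nonneg l) n, sq_nonneg l]
    · exact hint
    · filter_upwards with l
      exact ptlim l n
  exact tendsto_nhds_unique htend hdct

lemma fatou_step (ρ : Measure ℝ) (c : ℕ → ℝ) (n : ℕ) (hev : Even n)
    (hall : ∀ η : ℝ, 1 ≤ η → Integrable (fun l : ℝ => l ^ n * η^2 / (l^2 + η^2)) ρ)
    (htend : Tendsto (fun η : ℝ => ∫ l : ℝ, l ^ n * η^2 / (l^2 + η^2) ∂ρ)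
      atTop (nhds (c n))) :
    Integrable (fun l : ℝ => |l| ^ n) ρ := by
  have hnn : ∀ l : ℝ, 0 ≤ l ^ n := fun l => hev.pow_nonneg l
  set φ : ℕ → ℝ → ℝ := fun m l => l ^ n * ((m:ℝ)+1)^2 / (l^2 + ((m:ℝ)+1)^2) with hφ
  have hφnn : ∀ m l, 0 ≤ φ m l := by
    intro m l
    apply div_nonneg (mul_nonneg (hnn l) (by positivity)) (by positivity)
  have hseq : Tendsto (fun m : ℕ => ((m:ℝ)+1)) atTop atTop :=
    tendsto_atTop_add_const_right atTop 1 tendsto_natCast_atTop_atTop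
  have hmono : ∀ l : ℝ, Monotone (fun m : ℕ => φ m l) := by
    intro l a b hab
    simp only [hφ]
    have hA : (1:ℝ) ≤ (a:ℝ)+1 := by linarith [show (0:ℝ) ≤ (a:ℝ) from Nat.cast_nonneg a]
    have hAB : ((a:ℝ)+1) ≤ (b:ℝ)+1 := by
      have : (a:ℝ) ≤ (b:ℝ) := Nat.cast_le.2 hab
      linarith
    rw [div_le_div_iff₀ (by positivity) (by positivity)]
    have hAB2 : ((a:ℝ)+1)^2 ≤ ((b:ℝ)+1)^2 := by nlinarith
    have key : ((a:ℝ)+1)^2 * (l^2 + ((b:ℝ)+1)^2) ≤ ((b:ℝ)+1)^2 * (l^2 + ((a:ℝ)+1)^2) := by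
      nlinarith [mul_le_mul_of_nonneg_right hAB2 (sq_nonneg l)]
    nlinarith [hnn l, mul_le_mul_of_nonneg_left key (hnn l)]
  have hmeasφ : ∀ m : ℕ, Measurable (fun l : ℝ => ENNReal.ofReal (φ m l)) := by
    intro m
    exact (((measurable_id.pow_const n).mul_const _).div
      ((measurable_id.pow_const 2).add_const _)).ennreal_ofReal
  have hptend : ∀ l : ℝ, Tendsto (fun m : ℕ => φ m l) atTop (nhds (l ^ n)) := by
    intro l
    exact (ptlim l n).comp hseq
  have hsup : ∀ l : ℝ, (⨆ m : ℕ, ENNReal.ofReal (φ m l)) = ENNReal.ofReal (l ^ n) := by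
    intro l
    apply iSup_eq_of_tendsto
    · exact fun a b hab => ENNReal.ofReal_le_ofReal (hmono l hab)
    · exact ENNReal.tendsto_ofReal (hptend l)
  have hlint : ∀ m : ℕ, (∫⁻ l : ℝ, ENNReal.ofReal (φ m l) ∂ρ)
      = ENNReal.ofReal (∫ l : ℝ, φ m l ∂ρ) := by
    intro m
    rw [ofReal_integral_eq_lintegral_ofReal
      (hall ((m:ℝ)+1) (by linarith [show (0:ℝ) ≤ (m:ℝ) from Nat.cast_nonneg m]))
      (Filter.Eventually.of_forall (hφnn m))]
  have hintlim : Tendsto (fun m : ℕ => ∫ l : ℝ, φ m l ∂ρ) atTop (nhds (c n)) :=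
    htend.comp hseq
  have hmono_lint : Monotone (fun m : ℕ => ∫⁻ l : ℝ, ENNReal.ofReal (φ m l) ∂ρ) := by
    intro a b hab
    apply lintegral_mono
    intro l
    exact ENNReal.ofReal_le_ofReal (hmono l hab)
  have hsup_lint : (⨆ m : ℕ, ∫⁻ l : ℝ, ENNReal.ofReal (φ m l) ∂ρ)
      = ENNReal.ofReal (c n) := by
    apply iSup_eq_of_tendsto hmono_lint
    have : Tendsto (fun m : ℕ => ENNReal.ofReal (∫ l : ℝ, φ m l ∂ρ)) atTop
        (nhds (ENNReal.ofReal (c n))) := ENNReal.tendsto_ofReal hintlim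
    apply this.congr
    intro m
    rw [hlint m]
  have hkey : (∫⁻ l : ℝ, ENNReal.ofReal (l ^ n) ∂ρ) = ENNReal.ofReal (c n) := by
    rw [← hsup_lint, ← lintegral_iSup hmeasφ]
    · apply lintegral_congr
      intro l
      rw [hsup l]
    · intro a b hab
      intro l
      exact ENNReal.ofReal_le_ofReal (hmono l hab)
  have hint1 : Integrable (fun l : ℝ => l ^ n) ρ := by
    refine ⟨(measurable_id.pow_const n).aestronglyMeasurable, ?_⟩
    rw [hasFiniteIntegral_iff_ofReal (Filter.Eventually.of_forall hnn)]
    rw [hkey]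
    exact ENNReal.ofReal_lt_top
  apply hint1.congr
  filter_upwards with l
  rw [← _root_.abs_of_nonneg (hnn l), _root_.abs_pow]

lemma odd_int (ρ : Measure ℝ) (n : ℕ)
    (h1 : Integrable (fun l : ℝ => |l| ^ n) ρ)
    (h2 : Integrable (fun l : ℝ => |l| ^ (n+2)) ρ) :
    Integrable (fun l : ℝ => |l| ^ (n+1)) ρ := by
  apply Integrable.mono' (h1.add h2)
    ((measurable_abs.pow_const _).aestronglyMeasurable)
  filter_upwards with l
  simp only [Pi.add_apply]
  rw [Real.norm_eq_abs, _root_.abs_pow, _root_.abs_abs]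
  rcases le_total |l| 1 with h | h
  · have hle : |l|^(n+1) ≤ |l|^n := pow_le_pow_of_le_one (abs_nonneg l) h (by omega)
    have h2' : (0:ℝ) ≤ |l|^(n+2) := by positivity
    linarith
  · have hle : |l|^(n+1) ≤ |l|^(n+2) := pow_le_pow_right₀ h (by omega)
    have h1' : (0:ℝ) ≤ |l|^n := by positivity
    linarith

theorem stmt_9 (ρ : Measure ℝ) (K : ℕ) (c : ℕ → ℝ)
    (hgrow : Integrable (fun l : ℝ => 1 / (1 + l ^ 2)) ρ)
    (hintC : ∀ z : ℂ, z.im ≠ 0 → Integrable (fun l : ℝ => ((l : ℂ) - z)⁻¹) ρ)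
    (hasym : Tendsto (fun η : ℝ =>
        (Complex.I * (η : ℂ)) ^ (2 * K + 1) *
          (-(∫ l : ℝ, ((l : ℂ) - Complex.I * (η : ℂ))⁻¹ ∂ρ) -
            ∑ j ∈ Finset.range (2 * K + 1),
              ((c j : ℝ) : ℂ) / (Complex.I * (η : ℂ)) ^ (j + 1)))
      atTop (nhds 0)) :
    ∀ j ≤ 2 * K, Integrable (fun l : ℝ => |l| ^ j) ρ ∧ c j = ∫ l : ℝ, l ^ j ∂ρ := by
  have key : ∀ k : ℕ, ∀ j, j ≤ 2 * k → j ≤ 2 * K →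
      Integrable (fun l : ℝ => |l| ^ j) ρ ∧ c j = ∫ l : ℝ, l ^ j ∂ρ := by
    intro k
    induction k with
    | zero =>
      intro j hj _
      have hj0 : j = 0 := by omega
      subst hj0
      obtain ⟨hall, htend⟩ := star_lim ρ K c hintC hasym 0 0 1 (Or.inl rfl) rfl
        (by omega) (fun i hi => absurd hi (by omega))
      have hint := fatou_step ρ c 0 (Even.zero) hall htend
      exact ⟨hint, dct_step ρ c 0 hint htend⟩
    | succ k ih =>
      intro j hj hjK
      rcases le_or_gt j (2*k) with hle | hgt
      · exact ih j hle hjK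
      -- j = 2k+1 or 2k+2, and 2k+2 ≤ 2K
      have hK2 : 2*k + 2 ≤ 2*K := by omega
      have hm : ∀ i < 2*k + 1, Integrable (fun l : ℝ => |l| ^ i) ρ
          ∧ c i = ∫ l : ℝ, l ^ i ∂ρ := by
        intro i hi
        exact ih i (by omega) (by omega)
      -- even step at n = 2k+2
      obtain ⟨hall₂, htend₂⟩ := star_lim ρ K c hintC hasym (2*k+2) (2*k+1) 2
        (Or.inr rfl) (by omega) (by omega) hm
      have hint₂ : Integrable (fun l : ℝ => |l| ^ (2*k+2)) ρ :=
        fatou_step ρ c (2*k+2) (by exact ⟨k+1, by ring⟩) hall₂ htend₂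
      have hceq₂ : c (2*k+2) = ∫ l : ℝ, l ^ (2*k+2) ∂ρ := dct_step ρ c (2*k+2) hint₂ htend₂
      -- odd step at n = 2k+1
      have hint₁ : Integrable (fun l : ℝ => |l| ^ (2*k+1)) ρ :=
        odd_int ρ (2*k) (hm (2*k) (by omega)).1 hint₂
      obtain ⟨hall₁, htend₁⟩ := star_lim ρ K c hintC hasym (2*k+1) (2*k+1) 1
        (Or.inl rfl) (by omega) (by omega) hm
      have hceq₁ : c (2*k+1) = ∫ l : ℝ, l ^ (2*k+1) ∂ρ := dct_step ρ c (2*k+1) hint₁ htend₁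
      rcases (by omega : j = 2*k+1 ∨ j = 2*k+2) with h | h <;> subst h
      · exact ⟨hint₁, hceq₁⟩
      · exact ⟨hint₂, hceq₂⟩
  intro j hj
  exact key K j hj hj
end

section
/- Let m₁ and m₂ be Herglotz–Nevanlinna functions with m₁(z) = −1/m₂(z), and let ρ₁, ρ₂ be the measures in their respective integral representations. Assume m₂(z)/z → β > 0 as |z| → ∞ along the imaginary axis. Then for any K ∈ ℕ₀, the moments of ρ₂ exist up to order 2K if and only if the moments of ρ₁ exist up to order 2K+2. -/
open MeasureTheory Filter Complex

/-- A Herglotz--Nevanlinna function: analytic on `ℂ ∖ ℝ`, mapping the upper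
half-plane into its closure, and symmetric under complex conjugation. -/
def IsHerglotz (m : ℂ → ℂ) : Prop :=
  DifferentiableOn ℂ m {z : ℂ | z.im ≠ 0} ∧
  (∀ z : ℂ, 0 < z.im → 0 ≤ (m z).im) ∧
  (∀ z : ℂ, z.im ≠ 0 → m (starRingEnd ℂ z) = starRingEnd ℂ (m z))

/-- The Herglotz integral representation `m(z) = a + bz + ∫ (1/(λ-z) - λ/(1+λ²)) dρ(λ)`
with `a ∈ ℝ`, `b ≥ 0` and `ρ` a non-negative Borel measure with `∫ dρ/(1+λ²) < ∞`. -/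
def HerglotzRep (m : ℂ → ℂ) (a b : ℝ) (ρ : Measure ℝ) : Prop :=
  0 ≤ b ∧ Integrable (fun l : ℝ => 1 / (1 + l ^ 2)) ρ ∧
  ∀ z : ℂ, z.im ≠ 0 →
    m z = (a : ℂ) + (b : ℂ) * z +
      ∫ l : ℝ, (((l : ℂ) - z)⁻¹ - (l : ℂ) / (1 + (l : ℂ) ^ 2)) ∂ρ

/-!
Along the imaginary axis, `Im m(iη)/η = b + ∫ dρ/(λ²+η²)` and, for finite `ρ`,
`Re m(iη) = c + ∫ λ dρ/(λ²+η²)`. Moments of `ρ` up to order `2d` are equivalent to an expansion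
of `η² ∫ dρ/(λ²+η²)` in powers of `η⁻²` up to `O(η^{-2d})`: the identity
`η² ∫ g/(λ²+η²) dρ = ∫ g dρ - ∫ λ² g/(λ²+η²) dρ` peels off one moment per order, by dominated
convergence in one direction and Fatou's lemma in the other.

Since `m₂(iη) ~ iβη`, the relation `m₁ = -1/m₂` gives `η² Im m₁(iη)/η → 1/β`, which forces
`b₁ = 0`. By `Im(-1/w) = Im w / |w|²`, the function `η² Im m₁(iη)/η = η² ∫ dρ₁/(λ²+η²)` is an
algebraic expression in `Re m₂(iη)` and `Im m₂(iη)/η = β + ∫ dρ₂/(λ²+η²)`, and conversely, and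
these expressions preserve the order of expansions. The shift from `2K` to `2K + 2` moments
comes from the missing factor `η²` in front of `∫ dρ₂/(λ²+η²)`.
-/

open Topology

/-- `f η = c₀ + c₁ η⁻² + ⋯ + c_{N-1} η^{-2(N-1)} + O(η^{-2N})` as `η → ∞`. -/
def HasInvSqExpansion : (ℝ → ℝ) → ℕ → Prop
  | f, 0 => ∃ C, ∀ᶠ η in atTop, |f η| ≤ C
  | f, N + 1 => ∃ c, Tendsto f atTop (𝓝 c) ∧ HasInvSqExpansion (fun η => η ^ 2 * (f η - c)) N

namespace HasInvSqExpansion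

theorem congr : ∀ {N : ℕ} {f g : ℝ → ℝ}, HasInvSqExpansion f N → f =ᶠ[atTop] g →
    HasInvSqExpansion g N
  | 0, _, _, ⟨C, hC⟩, hfg => ⟨C, by filter_upwards [hC, hfg] with η h e; rwa [← e]⟩
  | _ + 1, _, _, ⟨c, hc, h⟩, hfg =>
    ⟨c, hc.congr' hfg, h.congr (by filter_upwards [hfg] with η e; rw [e])⟩

theorem of_tendsto {f : ℝ → ℝ} {c : ℝ} (hf : Tendsto f atTop (𝓝 c)) :
    HasInvSqExpansion f 0 :=
  ⟨|c| + 1, hf.abs.eventually (eventually_le_nhds (lt_add_one _))⟩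

theorem exists_bound : ∀ {N : ℕ} {f : ℝ → ℝ}, HasInvSqExpansion f N →
    ∃ C, ∀ᶠ η in atTop, |f η| ≤ C
  | 0, _, h => h
  | _ + 1, _, ⟨_, hc, _⟩ => of_tendsto hc

theorem of_succ : ∀ {N : ℕ} {f : ℝ → ℝ}, HasInvSqExpansion f (N + 1) → HasInvSqExpansion f N
  | 0, _, h => h.exists_bound
  | _ + 1, _, ⟨c, hc, h⟩ => ⟨c, hc, h.of_succ⟩

theorem const (c : ℝ) : ∀ N : ℕ, HasInvSqExpansion (fun _ => c) N
  | 0 => of_tendsto tendsto_const_nhds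
  | N + 1 => ⟨c, tendsto_const_nhds, by simpa using const 0 N⟩

theorem add : ∀ {N : ℕ} {f g : ℝ → ℝ}, HasInvSqExpansion f N → HasInvSqExpansion g N →
    HasInvSqExpansion (fun η => f η + g η) N
  | 0, _, _, ⟨C, hC⟩, ⟨D, hD⟩ => ⟨C + D, by
      filter_upwards [hC, hD] with η h₁ h₂ using (abs_add_le _ _).trans (add_le_add h₁ h₂)⟩
  | _ + 1, f, g, ⟨c, hc, hf⟩, ⟨d, hd, hg⟩ => ⟨c + d, hc.add hd,
      (hf.add hg).congr (.of_forall fun η => by ring)⟩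

theorem mul : ∀ {N : ℕ} {f g : ℝ → ℝ}, HasInvSqExpansion f N → HasInvSqExpansion g N →
    HasInvSqExpansion (fun η => f η * g η) N
  | 0, _, _, ⟨C, hC⟩, ⟨D, hD⟩ => ⟨|C| * |D|, by
      filter_upwards [hC, hD] with η h₁ h₂
      rw [abs_mul]
      exact mul_le_mul (h₁.trans (le_abs_self C)) (h₂.trans (le_abs_self D))
        (abs_nonneg _) (abs_nonneg _)⟩
  | N + 1, f, g, ⟨c, hc, hf⟩, hg'@⟨d, hd, hg⟩ => ⟨c * d, hc.mul hd,
      ((hf.mul hg'.of_succ).add ((const c N).mul hg)).congr (.of_forall fun η => by ring)⟩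

theorem neg {N : ℕ} {f : ℝ → ℝ} (hf : HasInvSqExpansion f N) :
    HasInvSqExpansion (fun η => -f η) N :=
  ((const (-1) N).mul hf).congr (.of_forall fun η => by ring)

theorem inv {N : ℕ} {f : ℝ → ℝ} {c : ℝ} (hf : HasInvSqExpansion f N)
    (hc : Tendsto f atTop (𝓝 c)) (hc₀ : c ≠ 0) : HasInvSqExpansion (fun η => (f η)⁻¹) N := by
  induction N generalizing f with
  | zero =>
    refine ⟨(|c| / 2)⁻¹, ?_⟩
    filter_upwards [hc.abs.eventually (eventually_ge_nhds (half_lt_self (abs_pos.2 hc₀)))]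
      with η h
    rw [abs_inv]
    exact inv_anti₀ (by positivity) h
  | succ N ih =>
    have hinv := ih hf.of_succ hc
    obtain ⟨c', hc', h⟩ := hf
    rw [tendsto_nhds_unique hc' hc] at h
    refine ⟨c⁻¹, hc.inv₀ hc₀, (h.mul ((const (-c⁻¹) N).mul hinv)).congr ?_⟩
    filter_upwards [hc.eventually_ne hc₀] with η hη
    field_simp
    ring

theorem inv_sq_mul {N : ℕ} {f : ℝ → ℝ} (hf : HasInvSqExpansion f N) :
    HasInvSqExpansion (fun η => (η ^ 2)⁻¹ * f η) (N + 1) := by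
  obtain ⟨C, hC⟩ := hf.exists_bound
  have hinv : Tendsto (fun η : ℝ => (η ^ 2)⁻¹) atTop (𝓝 0) :=
    (tendsto_pow_atTop two_ne_zero).inv_tendsto_atTop
  refine ⟨0, ?_, hf.congr ?_⟩
  · refine squeeze_zero_norm' ?_ (by simpa using hinv.const_mul C)
    filter_upwards [hC, eventually_ne_atTop 0] with η h hη
    rw [Real.norm_eq_abs, abs_mul, abs_of_pos (by positivity), mul_comm]
    exact mul_le_mul_of_nonneg_right h (by positivity)
  · filter_upwards [eventually_ne_atTop 0] with η hη
    field_simp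
    ring

theorem sq_mul_of_tendsto_zero {N : ℕ} {f : ℝ → ℝ} (hf : HasInvSqExpansion f (N + 1))
    (h₀ : Tendsto f atTop (𝓝 0)) : HasInvSqExpansion (fun η => η ^ 2 * f η) N := by
  obtain ⟨c, hc, h⟩ := hf
  obtain rfl : c = 0 := tendsto_nhds_unique hc h₀
  simpa using h

theorem tendsto_div_self {N : ℕ} {f : ℝ → ℝ} (hf : HasInvSqExpansion f N) :
    Tendsto (fun η => f η / η) atTop (𝓝 0) := by
  obtain ⟨C, hC⟩ := hf.exists_bound
  refine squeeze_zero_norm' ?_ (by simpa using tendsto_inv_atTop_zero.const_mul C)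
  filter_upwards [hC, eventually_gt_atTop 0] with η h hη
  rw [Real.norm_eq_abs, abs_div, abs_of_pos hη, div_eq_mul_inv]
  exact mul_le_mul_of_nonneg_right h (by positivity)

/-- With `A = Re w` and `G = Im w / η`, this is `η² · Im(-1/w) / η`. -/
theorem div_sq_add_sq {N : ℕ} {A G : ℝ → ℝ} {c : ℝ} (hA : HasInvSqExpansion A N)
    (hG : HasInvSqExpansion G (N + 1)) (hc : Tendsto G atTop (𝓝 c)) (hc₀ : c ≠ 0) :
    HasInvSqExpansion (fun η => G η / ((A η / η) ^ 2 + G η ^ 2)) (N + 1) := by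
  have hD : HasInvSqExpansion (fun η => (A η / η) ^ 2 + G η ^ 2) (N + 1) :=
    ((hA.mul hA).inv_sq_mul.add (hG.mul hG)).congr (.of_forall fun η => by ring)
  have hDlim : Tendsto (fun η => (A η / η) ^ 2 + G η ^ 2) atTop (𝓝 (0 ^ 2 + c ^ 2)) :=
    (hA.tendsto_div_self.pow 2).add (hc.pow 2)
  rw [zero_pow two_ne_zero, zero_add] at hDlim
  exact (hG.mul (hD.inv hDlim (by positivity))).congr
    (Eventually.of_forall fun η => (div_eq_mul_inv _ _).symm)

end HasInvSqExpansion

/-- At `z = iη` the Herglotz kernel `(λ - z)⁻¹` has real part `λ/(λ²+η²)` and imaginary part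
`η/(λ²+η²)`; both are of this form. -/
noncomputable def axisIntegral (ρ : Measure ℝ) (g : ℝ → ℝ) (η : ℝ) : ℝ :=
  ∫ l, g l / (l ^ 2 + η ^ 2) ∂ρ

section AxisIntegral

variable {ρ : Measure ℝ} {g : ℝ → ℝ} {η : ℝ}

lemma sq_add_sq_pos (l : ℝ) (hη : η ≠ 0) : 0 < l ^ 2 + η ^ 2 := by positivity

lemma norm_mul_sq_div_sq_add_sq_le (x l η : ℝ) : ‖x * (η ^ 2 / (l ^ 2 + η ^ 2))‖ ≤ ‖x‖ := by
  rw [norm_mul, Real.norm_of_nonneg (by positivity : 0 ≤ η ^ 2 / (l ^ 2 + η ^ 2))]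
  exact mul_le_of_le_one_right (norm_nonneg _)
    (div_le_one_of_le₀ (by nlinarith [sq_nonneg l]) (by positivity))

lemma MeasureTheory.Integrable.mul_div_sq_add_sq (hg : Integrable g ρ) {p : ℝ → ℝ}
    (hpc : Continuous p) (hp₀ : ∀ l, 0 ≤ p l) (hp : ∀ l, p l ≤ l ^ 2 + η ^ 2) :
    Integrable (fun l => g l * (p l / (l ^ 2 + η ^ 2))) ρ := by
  refine (hg.bdd_mul (c := 1) (by fun_prop : Measurable _).aestronglyMeasurable
    (.of_forall fun l => ?_)).congr (.of_forall fun l => mul_comm _ _)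
  rw [Real.norm_of_nonneg (div_nonneg (hp₀ l) (by positivity))]
  exact div_le_one_of_le₀ (hp l) (by positivity)

lemma integrable_div_sq_add_sq (hg : Integrable (fun l => g l / (1 + l ^ 2)) ρ) (hη : η ≠ 0) :
    Integrable (fun l => g l / (l ^ 2 + η ^ 2)) ρ := by
  refine (hg.bdd_mul (c := 1 + (η ^ 2)⁻¹) (f := fun l => (1 + l ^ 2) / (l ^ 2 + η ^ 2))
    (by fun_prop : Measurable _).aestronglyMeasurable (.of_forall fun l => ?_)).congr
    (.of_forall fun l => ?_)
  · have hη2 : (η ^ 2)⁻¹ * η ^ 2 = 1 := inv_mul_cancel₀ (by positivity)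
    rw [Real.norm_of_nonneg (by positivity), div_le_iff₀ (sq_add_sq_pos l hη)]
    nlinarith [mul_nonneg (inv_nonneg.2 (sq_nonneg η)) (sq_nonneg l)]
  · have := sq_add_sq_pos l hη
    field_simp

lemma tendsto_sq_div_sq_add_sq (l : ℝ) :
    Tendsto (fun η : ℝ => η ^ 2 / (l ^ 2 + η ^ 2)) atTop (𝓝 1) := by
  have h : Tendsto (fun η : ℝ => l ^ 2 / (l ^ 2 + η ^ 2)) atTop (𝓝 0) :=
    tendsto_const_nhds.div_atTop
      (tendsto_atTop_add_const_left _ _ (tendsto_pow_atTop two_ne_zero))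
  refine (by simpa using (tendsto_const_nhds (x := (1 : ℝ))).sub h :
    Tendsto (fun η : ℝ => 1 - l ^ 2 / (l ^ 2 + η ^ 2)) atTop (𝓝 1)).congr' ?_
  filter_upwards [eventually_ne_atTop 0] with η hη
  have := sq_add_sq_pos l hη
  field_simp
  ring

lemma sq_mul_axisIntegral (η : ℝ) :
    η ^ 2 * axisIntegral ρ g η = ∫ l, g l * (η ^ 2 / (l ^ 2 + η ^ 2)) ∂ρ := by
  rw [axisIntegral, ← integral_const_mul]
  congr 1 with l
  ring

lemma tendsto_sq_mul_axisIntegral (hg : Integrable g ρ) :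
    Tendsto (fun η => η ^ 2 * axisIntegral ρ g η) atTop (𝓝 (∫ l, g l ∂ρ)) := by
  have hmeas (η : ℝ) : AEStronglyMeasurable (fun l => g l * (η ^ 2 / (l ^ 2 + η ^ 2))) ρ :=
    (hg.mul_div_sq_add_sq continuous_const (fun _ => sq_nonneg η)
      (fun l => by nlinarith [sq_nonneg l])).aestronglyMeasurable
  simp only [sq_mul_axisIntegral]
  exact tendsto_integral_filter_of_dominated_convergence (fun l => ‖g l‖) (.of_forall hmeas)
    (.of_forall fun η => .of_forall fun l => norm_mul_sq_div_sq_add_sq_le _ l η) hg.norm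
    (.of_forall fun l => by simpa using (tendsto_sq_div_sq_add_sq l).const_mul (g l))

lemma tendsto_axisIntegral_zero (hg : Integrable (fun l => g l / (1 + l ^ 2)) ρ) :
    Tendsto (axisIntegral ρ g) atTop (𝓝 0) := by
  have hdiv (l : ℝ) : Tendsto (fun η : ℝ => g l / (l ^ 2 + η ^ 2)) atTop (𝓝 0) :=
    tendsto_const_nhds.div_atTop (tendsto_atTop_add_const_left _ _
      (tendsto_pow_atTop two_ne_zero))
  have hbound (η : ℝ) (hη : 1 ≤ η) (l : ℝ) :
      ‖g l / (l ^ 2 + η ^ 2)‖ ≤ ‖g l / (1 + l ^ 2)‖ := by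
    rw [norm_div, norm_div, Real.norm_of_nonneg (by positivity : (0:ℝ) ≤ l ^ 2 + η ^ 2),
      Real.norm_of_nonneg (by positivity : (0:ℝ) ≤ 1 + l ^ 2)]
    exact div_le_div_of_nonneg_left (norm_nonneg _) (by positivity) (by nlinarith)
  rw [show axisIntegral ρ g = fun η => ∫ l, g l / (l ^ 2 + η ^ 2) ∂ρ from rfl]
  simpa using tendsto_integral_filter_of_dominated_convergence (fun l => ‖g l / (1 + l ^ 2)‖)
    ((eventually_ne_atTop 0).mono fun η hη =>
      (integrable_div_sq_add_sq hg hη).aestronglyMeasurable)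
    ((eventually_ge_atTop 1).mono fun η hη => .of_forall (hbound η hη)) hg.norm
    (.of_forall hdiv)

lemma sq_mul_axisIntegral_eq_sub (hg : Integrable g ρ) (hη : η ≠ 0) :
    η ^ 2 * axisIntegral ρ g η = ∫ l, g l ∂ρ - axisIntegral ρ (fun l => l ^ 2 * g l) η := by
  rw [sq_mul_axisIntegral, axisIntegral, eq_sub_iff_add_eq, ← integral_add
    (hg.mul_div_sq_add_sq continuous_const (fun _ => sq_nonneg η)
      (fun l => by nlinarith [sq_nonneg l]))
    ((hg.mul_div_sq_add_sq (continuous_pow 2) sq_nonneg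
      (fun l => by nlinarith [sq_nonneg η])).congr (.of_forall fun l => by ring))]
  congr 1 with l
  have := sq_add_sq_pos l hη
  field_simp
  ring

end AxisIntegral

section Moments

variable {ρ : Measure ℝ} {g : ℝ → ℝ}

lemma hasInvSqExpansion_sq_mul_axisIntegral :
    ∀ (d : ℕ) {g : ℝ → ℝ}, (∀ j ≤ d, Integrable (fun l => l ^ (2 * j) * g l) ρ) →
      HasInvSqExpansion (fun η => η ^ 2 * axisIntegral ρ g η) d
  | 0, g, h => by
    have hg : Integrable g ρ := by simpa using h 0 le_rfl
    refine ⟨∫ l, ‖g l‖ ∂ρ, .of_forall fun η => ?_⟩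
    dsimp only
    rw [sq_mul_axisIntegral, ← Real.norm_eq_abs]
    exact norm_integral_le_of_norm_le hg.norm
      (.of_forall fun l => norm_mul_sq_div_sq_add_sq_le _ l η)
  | d + 1, g, h => by
    have hg : Integrable g ρ := by simpa using h 0 (Nat.zero_le _)
    have hsucc : HasInvSqExpansion (fun η => η ^ 2 * axisIntegral ρ (fun l => l ^ 2 * g l) η) d :=
      hasInvSqExpansion_sq_mul_axisIntegral d fun j hj =>
        (h (j + 1) (by omega)).congr (.of_forall fun l => by ring)
    refine ⟨_, tendsto_sq_mul_axisIntegral hg, hsucc.neg.congr ?_⟩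
    filter_upwards [eventually_ne_atTop 0] with η hη
    rw [sq_mul_axisIntegral_eq_sub hg hη]
    ring

lemma hasInvSqExpansion_axisIntegral (hg : Integrable (fun l => g l / (1 + l ^ 2)) ρ) :
    ∀ d : ℕ, (∀ j < d, Integrable (fun l => l ^ (2 * j) * g l) ρ) →
      HasInvSqExpansion (axisIntegral ρ g) d
  | 0, _ => .of_tendsto (tendsto_axisIntegral_zero hg)
  | d + 1, h => by
    refine (hasInvSqExpansion_sq_mul_axisIntegral d fun j hj => h j (by omega)).inv_sq_mul.congr ?_
    filter_upwards [eventually_ne_atTop 0] with η hη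
    field_simp

/-- Fatou's lemma along `η = n`, since `η² / (λ² + η²) → 1`. -/
lemma integrable_of_sq_mul_axisIntegral_le (hg₀ : ∀ l, 0 ≤ g l)
    (hg : Integrable (fun l => g l / (1 + l ^ 2)) ρ) {C : ℝ}
    (hC : ∀ᶠ η in atTop, η ^ 2 * axisIntegral ρ g η ≤ C) : Integrable g ρ := by
  have hgm : AEStronglyMeasurable g ρ := by
    refine (hg.aestronglyMeasurable.mul
      (by fun_prop : Continuous fun l : ℝ => 1 + l ^ 2).aestronglyMeasurable).congr
      (.of_forall fun l => ?_)
    simp only [Pi.mul_apply]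
    field_simp
  set G : ℕ → ℝ → ℝ := fun n l => g l * ((n : ℝ) ^ 2 / (l ^ 2 + (n : ℝ) ^ 2))
  have hlim : ∀ l, Tendsto (fun n => G n l) atTop (𝓝 (g l)) := fun l => by
    simpa using ((tendsto_sq_div_sq_add_sq l).comp tendsto_natCast_atTop_atTop).const_mul (g l)
  have hbound : ∀ᶠ n : ℕ in atTop, ∫⁻ l, ‖G n l‖ₑ ∂ρ ≤ ENNReal.ofReal C := by
    filter_upwards [tendsto_natCast_atTop_atTop.eventually hC, eventually_ne_atTop 0]
      with n hn hn₀
    have hGn : Integrable (G n) ρ :=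
      ((integrable_div_sq_add_sq hg (Nat.cast_ne_zero.2 hn₀)).const_mul ((n : ℝ) ^ 2)).congr
        (.of_forall fun l => by simp only [G]; ring)
    rw [← ofReal_integral_norm_eq_lintegral_enorm hGn]
    refine ENNReal.ofReal_le_ofReal (le_of_eq_of_le ?_ hn)
    rw [sq_mul_axisIntegral]
    exact integral_congr_ae (.of_forall fun l => Real.norm_of_nonneg (by positivity [hg₀ l]))
  refine integrable_of_tendsto (.of_forall hlim)
    (fun n => hgm.mul (by fun_prop : Measurable _).aestronglyMeasurable) ?_
  exact ne_top_of_le_ne_top ENNReal.ofReal_ne_top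
    (liminf_le_of_frequently_le' hbound.frequently)

lemma integrable_pow_mul_of_hasInvSqExpansion :
    ∀ (d : ℕ) {g : ℝ → ℝ}, (∀ l, 0 ≤ g l) → Integrable (fun l => g l / (1 + l ^ 2)) ρ →
      HasInvSqExpansion (fun η => η ^ 2 * axisIntegral ρ g η) d →
      ∀ j ≤ d, Integrable (fun l => l ^ (2 * j) * g l) ρ := by
  intro d
  induction d with
  | zero =>
    intro g hg₀ hg h j hj
    obtain ⟨C, hC⟩ := h
    obtain rfl : j = 0 := by omega
    simpa using integrable_of_sq_mul_axisIntegral_le hg₀ hg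
      (hC.mono fun η h => (le_abs_self _).trans h)
  | succ d ih =>
    intro g hg₀ hg' h j hj
    obtain ⟨C, hC⟩ := h.exists_bound
    have hg : Integrable g ρ := integrable_of_sq_mul_axisIntegral_le hg₀ hg'
      (hC.mono fun η h => (le_abs_self _).trans h)
    obtain ⟨c, hc, h⟩ := h
    obtain rfl : c = ∫ l, g l ∂ρ := tendsto_nhds_unique hc (tendsto_sq_mul_axisIntegral hg)
    have hsucc : HasInvSqExpansion
        (fun η => η ^ 2 * axisIntegral ρ (fun l => l ^ 2 * g l) η) d := by
      refine h.neg.congr ?_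
      filter_upwards [eventually_ne_atTop 0] with η hη
      rw [sq_mul_axisIntegral_eq_sub hg hη]
      ring
    have hsq : Integrable (fun l => l ^ 2 * g l / (1 + l ^ 2)) ρ :=
      (hg.mul_div_sq_add_sq (η := 1) (continuous_pow 2) sq_nonneg
        (fun l => by nlinarith)).congr (.of_forall fun l => by ring)
    rcases j with _ | j
    · simpa using hg
    · exact (ih (fun l => by positivity [hg₀ l]) hsq hsucc j (by omega)).congr
        (.of_forall fun l => by ring)

def HasMomentsUpTo (ρ : Measure ℝ) (n : ℕ) : Prop :=
  ∀ j ≤ n, Integrable (fun l : ℝ => |l| ^ j) ρ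

lemma HasMomentsUpTo.integrable_pow {n j : ℕ} (h : HasMomentsUpTo ρ n) (hj : j ≤ n) :
    Integrable (fun l : ℝ => l ^ j) ρ :=
  (integrable_norm_iff (continuous_pow j).aestronglyMeasurable).1
    (by simpa only [norm_pow, Real.norm_eq_abs] using h j hj)

lemma HasMomentsUpTo.isFiniteMeasure {n : ℕ} (h : HasMomentsUpTo ρ n) : IsFiniteMeasure ρ :=
  (integrable_const_iff_isFiniteMeasure one_ne_zero).1 (by simpa using h 0 (Nat.zero_le _))

lemma HasMomentsUpTo.of_even {N : ℕ} (h : ∀ j ≤ N, Integrable (fun l : ℝ => l ^ (2 * j)) ρ) :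
    HasMomentsUpTo ρ (2 * N) := by
  intro j hj
  refine ((h 0 (Nat.zero_le _)).add (h N le_rfl)).mono' (by fun_prop)
    (.of_forall fun l => ?_)
  rw [Pi.add_apply, norm_pow, norm_abs_eq_norm, Real.norm_eq_abs, mul_zero, pow_zero, pow_mul,
    ← sq_abs]
  rcases le_total |l| 1 with hl | hl
  · exact (pow_le_one₀ (abs_nonneg l) hl).trans (le_add_of_nonneg_right (by positivity))
  · exact ((pow_le_pow_right₀ hl hj).trans_eq (pow_mul _ _ _)).trans
      (le_add_of_nonneg_left zero_le_one)

end Moments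

section ImaginaryAxis

variable {ρ : Measure ℝ} {η : ℝ}

lemma norm_div_one_add_sq_le_one (l : ℝ) : ‖l / (1 + l ^ 2)‖ ≤ 1 := by
  rw [norm_div, Real.norm_of_nonneg (by positivity : (0:ℝ) ≤ 1 + l ^ 2),
    div_le_one (by positivity), Real.norm_eq_abs]
  nlinarith [sq_abs l, sq_nonneg (|l| - 1)]

lemma integrable_div_one_add_sq_self [IsFiniteMeasure ρ] :
    Integrable (fun l : ℝ => l / (1 + l ^ 2)) ρ :=
  .of_bound (by fun_prop : Measurable fun l : ℝ => l / (1 + l ^ 2)).aestronglyMeasurable 1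
    (.of_forall norm_div_one_add_sq_le_one)

lemma inv_ofReal_sub_I_mul_sub (l : ℝ) (hη : η ≠ 0) :
    ((l : ℂ) - I * η)⁻¹ - l / (1 + (l : ℂ) ^ 2)
      = ((l / (l ^ 2 + η ^ 2) - l / (1 + l ^ 2) : ℝ) : ℂ)
        + ((η / (l ^ 2 + η ^ 2) : ℝ) : ℂ) * I := by
  have h₁ : (l : ℂ) - I * η ≠ 0 := fun h => hη (by simpa using congrArg im h)
  have h₂ : (1 + (l : ℂ) ^ 2) ≠ 0 := by exact_mod_cast (by positivity : (1 + l ^ 2 : ℝ) ≠ 0)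
  have h₃ : ((l ^ 2 + η ^ 2 : ℝ) : ℂ) ≠ 0 := by exact_mod_cast (sq_add_sq_pos l hη).ne'
  push_cast at h₃ ⊢
  field_simp
  ring_nf
  simp only [I_sq]
  ring

lemma integrable_herglotzKernel (hρ : Integrable (fun l : ℝ => 1 / (1 + l ^ 2)) ρ)
    (hη : η ≠ 0) :
    Integrable (fun l : ℝ => ((l : ℂ) - I * η)⁻¹ - l / (1 + (l : ℂ) ^ 2)) ρ := by
  have hre : Integrable (fun l : ℝ => l / (l ^ 2 + η ^ 2) - l / (1 + l ^ 2)) ρ := by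
    have h : Integrable (fun l : ℝ => (1 - η ^ 2) * (l / (1 + l ^ 2)) / (1 + l ^ 2)) ρ := by
      refine ((hρ.bdd_mul (c := 1) (f := fun l : ℝ => l / (1 + l ^ 2))
        (by fun_prop : Measurable fun l : ℝ => l / (1 + l ^ 2)).aestronglyMeasurable
        (.of_forall norm_div_one_add_sq_le_one)).const_mul (1 - η ^ 2)).congr
        (.of_forall fun l => by ring)
    refine (integrable_div_sq_add_sq h hη).congr (.of_forall fun l => ?_)
    have := sq_add_sq_pos l hη
    field_simp
    ring
  have him : Integrable (fun l : ℝ => η / (l ^ 2 + η ^ 2)) ρ :=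
    integrable_div_sq_add_sq ((hρ.const_mul η).congr (.of_forall fun l => by ring)) hη
  exact (hre.ofReal.add (him.ofReal.mul_const I)).congr
    (.of_forall fun l => (inv_ofReal_sub_I_mul_sub l hη).symm)

variable {m : ℂ → ℂ} {a b : ℝ}

lemma HerglotzRep.im_div (hrep : HerglotzRep m a b ρ) (hη : η ≠ 0) :
    (m (I * η)).im / η = b + axisIntegral ρ (fun _ => 1) η := by
  have hint := integral_im (integrable_herglotzKernel hrep.2.1 hη)
  simp only [RCLike.im_to_complex] at hint
  rw [hrep.2.2 _ (by simpa), add_im, add_im, ← hint]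
  simp only [inv_ofReal_sub_I_mul_sub _ hη, add_im, ofReal_im, mul_im, ofReal_re, I_re, I_im,
    mul_zero, mul_one, zero_add, add_zero, zero_mul, one_mul, axisIntegral]
  rw [show ∫ l, η / (l ^ 2 + η ^ 2) ∂ρ = η * ∫ l, 1 / (l ^ 2 + η ^ 2) ∂ρ by
    simp only [← integral_const_mul, mul_one_div]]
  field_simp

lemma HerglotzRep.re_eq [IsFiniteMeasure ρ] (hrep : HerglotzRep m a b ρ) (hη : η ≠ 0) :
    (m (I * η)).re = (a - ∫ l, l / (1 + l ^ 2) ∂ρ) + axisIntegral ρ (fun l => l) η := by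
  have hint := integral_re (integrable_herglotzKernel hrep.2.1 hη)
  simp only [RCLike.re_to_complex] at hint
  rw [hrep.2.2 _ (by simpa), add_re, add_re, ← hint]
  simp only [inv_ofReal_sub_I_mul_sub _ hη, add_re, ofReal_re, mul_re, ofReal_im, I_re, I_im,
    mul_zero, zero_mul, sub_zero, add_zero, axisIntegral]
  rw [integral_sub (integrable_div_sq_add_sq integrable_div_one_add_sq_self hη)
    integrable_div_one_add_sq_self]
  ring

lemma div_I_mul_ofReal (w : ℂ) (hη : η ≠ 0) :
    w / (I * η) = ((w.im / η : ℝ) : ℂ) - ((w.re / η : ℝ) : ℂ) * I := by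
  have : (I * η : ℂ) ≠ 0 := mul_ne_zero I_ne_zero (ofReal_ne_zero.2 hη)
  rw [div_eq_iff this]
  apply Complex.ext <;> simp <;> field_simp

lemma sq_mul_im_neg_inv_div (w : ℂ) (hη : η ≠ 0) :
    η ^ 2 * ((-w⁻¹).im / η) = (w.im / η) / ((w.re / η) ^ 2 + (w.im / η) ^ 2) := by
  rcases eq_or_ne w 0 with rfl | hw
  · simp
  have := normSq_pos.2 hw
  rw [normSq_apply] at this
  rw [neg_im, inv_im, normSq_apply]
  field_simp

lemma im_neg_inv_div (w : ℂ) (hη : η ≠ 0) :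
    (-w⁻¹).im / η
      = η ^ 2 * (w.im / η) / ((η ^ 2 * w.re / η) ^ 2 + (η ^ 2 * (w.im / η)) ^ 2) := by
  rcases eq_or_ne w 0 with rfl | hw
  · simp
  have := normSq_pos.2 hw
  rw [normSq_apply] at this
  rw [neg_im, inv_im, normSq_apply]
  field_simp

lemma re_neg_inv_eq (w : ℂ) (hη : η ≠ 0) :
    (-w⁻¹).re = -(w.re / η) / ((w.re / η) ^ 2 + (w.im / η) ^ 2) * η⁻¹ := by
  rcases eq_or_ne w 0 with rfl | hw
  · simp
  have := normSq_pos.2 hw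
  rw [normSq_apply] at this
  rw [neg_re, inv_re, normSq_apply]
  field_simp

end ImaginaryAxis

section Limits

variable {f : ℝ → ℂ} {β : ℝ}

lemma tendsto_im_div_of_tendsto_div_I_mul
    (h : Tendsto (fun η : ℝ => f η / (I * η)) atTop (𝓝 (β : ℂ))) :
    Tendsto (fun η => (f η).im / η) atTop (𝓝 β) := by
  refine (by simpa [Function.comp_def] using (continuous_re.tendsto _).comp h :
    Tendsto (fun η : ℝ => (f η / (I * η)).re) atTop (𝓝 β)).congr' ?_
  filter_upwards [eventually_ne_atTop 0] with η hη
  simp [div_I_mul_ofReal _ hη]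

lemma tendsto_re_div_of_tendsto_div_I_mul
    (h : Tendsto (fun η : ℝ => f η / (I * η)) atTop (𝓝 (β : ℂ))) :
    Tendsto (fun η => (f η).re / η) atTop (𝓝 0) := by
  refine (by simpa [Function.comp_def] using ((continuous_im.tendsto _).comp h).neg :
    Tendsto (fun η : ℝ => -(f η / (I * η)).im) atTop (𝓝 0)).congr' ?_
  filter_upwards [eventually_ne_atTop 0] with η hη
  simp [div_I_mul_ofReal _ hη]

lemma tendsto_sq_mul_im_neg_inv_div (hβ : β ≠ 0)
    (hq : Tendsto (fun η => (f η).im / η) atTop (𝓝 β))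
    (hr : Tendsto (fun η => (f η).re / η) atTop (𝓝 0)) :
    Tendsto (fun η => η ^ 2 * ((-(f η)⁻¹).im / η)) atTop (𝓝 β⁻¹) := by
  have h := hq.div ((hr.pow 2).add (hq.pow 2)) (by positivity)
  rw [zero_pow two_ne_zero, zero_add, sq, div_mul_cancel_left₀ hβ] at h
  refine h.congr' ?_
  filter_upwards [eventually_ne_atTop 0] with η hη
  exact (sq_mul_im_neg_inv_div _ hη).symm

lemma tendsto_re_neg_inv (hβ : β ≠ 0) (hq : Tendsto (fun η => (f η).im / η) atTop (𝓝 β))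
    (hr : Tendsto (fun η => (f η).re / η) atTop (𝓝 0)) :
    Tendsto (fun η => (-(f η)⁻¹).re) atTop (𝓝 0) := by
  have h := ((hr.neg.div ((hr.pow 2).add (hq.pow 2)) (by positivity)).mul
    tendsto_inv_atTop_zero)
  rw [mul_zero] at h
  refine h.congr' ?_
  filter_upwards [eventually_ne_atTop 0] with η hη
  exact (re_neg_inv_eq _ hη).symm

end Limits

section NegInv

variable {m w : ℂ → ℂ} {a a' b b' : ℝ} {ρ ρ' : Measure ℝ}

lemma HerglotzRep.eq_zero_of_tendsto_sq_mul_im_div (hrep : HerglotzRep m a b ρ) {c : ℝ}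
    (hc : Tendsto (fun η : ℝ => η ^ 2 * ((m (I * η)).im / η)) atTop (𝓝 c)) : b = 0 := by
  have hdecay : Tendsto (fun η : ℝ => (m (I * η)).im / η) atTop (𝓝 0) := by
    refine (by simpa using ((tendsto_pow_atTop two_ne_zero).inv_tendsto_atTop).mul hc :
      Tendsto (fun η : ℝ => (η ^ 2)⁻¹ * (η ^ 2 * ((m (I * η)).im / η))) atTop (𝓝 0)).congr' ?_
    filter_upwards [eventually_ne_atTop 0] with η hη
    field_simp
  have hb : Tendsto (fun η : ℝ => (m (I * η)).im / η) atTop (𝓝 b) := by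
    refine (by simpa using (tendsto_axisIntegral_zero hrep.2.1).const_add b :
      Tendsto (fun η => b + axisIntegral ρ (fun _ => 1) η) atTop (𝓝 b)).congr' ?_
    filter_upwards [eventually_ne_atTop 0] with η hη
    exact (hrep.im_div hη).symm
  exact tendsto_nhds_unique hb hdecay

lemma hasMomentsUpTo_add_two_of_neg_inv (hrep : HerglotzRep m a 0 ρ)
    (hrep' : HerglotzRep w a' b' ρ') (hrel : ∀ z : ℂ, z.im ≠ 0 → m z = -(w z)⁻¹) {β : ℝ}
    (hβ : β ≠ 0) (hq : Tendsto (fun η : ℝ => (w (I * η)).im / η) atTop (𝓝 β)) {K : ℕ}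
    (hmom : HasMomentsUpTo ρ' (2 * K)) : HasMomentsUpTo ρ (2 * K + 2) := by
  have := hmom.isFiniteMeasure
  have hre : HasInvSqExpansion (fun η => (w (I * η)).re) K := by
    refine ((HasInvSqExpansion.const (a' - ∫ l, l / (1 + l ^ 2) ∂ρ') K).add
      (hasInvSqExpansion_axisIntegral (integrable_div_one_add_sq_self (ρ := ρ')) K
        fun j hj => ?_)).congr ?_
    · exact (hmom.integrable_pow (j := 2 * j + 1) (by omega)).congr (.of_forall fun l => by ring)
    · filter_upwards [eventually_ne_atTop 0] with η hη
      exact (hrep'.re_eq hη).symm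
  have him : HasInvSqExpansion (fun η => (w (I * η)).im / η) (K + 1) := by
    refine ((HasInvSqExpansion.const b' _).add (hasInvSqExpansion_axisIntegral hrep'.2.1 (K + 1)
      fun j hj => ?_)).congr ?_
    · simpa using hmom.integrable_pow (j := 2 * j) (by omega)
    · filter_upwards [eventually_ne_atTop 0] with η hη
      exact (hrep'.im_div hη).symm
  have hS : HasInvSqExpansion (fun η => η ^ 2 * axisIntegral ρ (fun _ => 1) η) (K + 1) := by
    refine (hre.div_sq_add_sq him hq hβ).congr ?_
    filter_upwards [eventually_ne_atTop 0] with η hη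
    rw [← sq_mul_im_neg_inv_div _ hη, ← hrel _ (by simpa), hrep.im_div hη, zero_add]
  rw [show 2 * K + 2 = 2 * (K + 1) by ring]
  exact .of_even fun j hj => by
    simpa using integrable_pow_mul_of_hasInvSqExpansion (K + 1) (fun _ => zero_le_one)
      hrep.2.1 hS j hj

lemma hasMomentsUpTo_of_neg_inv_add_two (hrep : HerglotzRep m a b ρ)
    (hrep' : HerglotzRep w a' 0 ρ') (hrel : ∀ z : ℂ, z.im ≠ 0 → m z = -(w z)⁻¹) {c : ℝ}
    (hc : c ≠ 0) (hq : Tendsto (fun η : ℝ => η ^ 2 * ((w (I * η)).im / η)) atTop (𝓝 c))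
    (hw : Tendsto (fun η : ℝ => (w (I * η)).re) atTop (𝓝 0)) {K : ℕ}
    (hmom : HasMomentsUpTo ρ' (2 * K + 2)) : HasMomentsUpTo ρ (2 * K) := by
  have := hmom.isFiniteMeasure
  have ha : a' - ∫ l, l / (1 + l ^ 2) ∂ρ' = 0 := by
    have hS := (tendsto_axisIntegral_zero (integrable_div_one_add_sq_self (ρ := ρ'))).const_add
      (a' - ∫ l, l / (1 + l ^ 2) ∂ρ')
    rw [add_zero] at hS
    refine tendsto_nhds_unique (hS.congr' ?_) hw
    filter_upwards [eventually_ne_atTop 0] with η hη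
    exact (hrep'.re_eq hη).symm
  have hre : HasInvSqExpansion (fun η => η ^ 2 * (w (I * η)).re) K := by
    refine (hasInvSqExpansion_sq_mul_axisIntegral (ρ := ρ') K (g := fun l => l)
      fun j hj => ?_).congr ?_
    · exact (hmom.integrable_pow (j := 2 * j + 1) (by omega)).congr (.of_forall fun l => by ring)
    · filter_upwards [eventually_ne_atTop 0] with η hη
      rw [hrep'.re_eq hη, ha, zero_add]
  have him : HasInvSqExpansion (fun η => η ^ 2 * ((w (I * η)).im / η)) (K + 1) := by
    refine (hasInvSqExpansion_sq_mul_axisIntegral (ρ := ρ') (K + 1) (g := fun _ => 1)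
      fun j hj => ?_).congr ?_
    · simpa using hmom.integrable_pow (j := 2 * j) (by omega)
    · filter_upwards [eventually_ne_atTop 0] with η hη
      rw [hrep'.im_div hη, zero_add]
  have hS : HasInvSqExpansion (axisIntegral ρ (fun _ => 1)) (K + 1) := by
    refine ((hre.div_sq_add_sq him hq hc).add (HasInvSqExpansion.const (-b) _)).congr ?_
    filter_upwards [eventually_ne_atTop 0] with η hη
    rw [← im_neg_inv_div _ hη, ← hrel _ (by simpa), hrep.im_div hη]
    ring
  exact .of_even fun j hj => by
    simpa using integrable_pow_mul_of_hasInvSqExpansion K (fun _ => zero_le_one) hrep.2.1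
      (hS.sq_mul_of_tendsto_zero (tendsto_axisIntegral_zero hrep.2.1)) j hj

end NegInv

theorem stmt_10_general (m₁ m₂ : ℂ → ℂ)
    (a₁ b₁ a₂ b₂ : ℝ) (ρ₁ ρ₂ : Measure ℝ)
    (hrep₁ : HerglotzRep m₁ a₁ b₁ ρ₁) (hrep₂ : HerglotzRep m₂ a₂ b₂ ρ₂)
    (hrel : ∀ z : ℂ, z.im ≠ 0 → m₁ z = -(m₂ z)⁻¹)
    (β : ℝ) (hβ : 0 < β)
    (hlim : Tendsto (fun η : ℝ => m₂ (Complex.I * (η : ℂ)) / (Complex.I * (η : ℂ)))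
      atTop (nhds (β : ℂ)))
    (K : ℕ) :
    (∀ j ≤ 2 * K, Integrable (fun l : ℝ => |l| ^ j) ρ₂) ↔
      (∀ j ≤ 2 * K + 2, Integrable (fun l : ℝ => |l| ^ j) ρ₁) := by
  have hq₂ := tendsto_im_div_of_tendsto_div_I_mul hlim
  have hr₂ := tendsto_re_div_of_tendsto_div_I_mul hlim
  have hm₁ (η : ℝ) (hη : η ≠ 0) : m₁ (I * η) = -(m₂ (I * η))⁻¹ := hrel _ (by simpa)
  have hq₁ : Tendsto (fun η : ℝ => η ^ 2 * ((m₁ (I * η)).im / η)) atTop (𝓝 β⁻¹) :=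
    (tendsto_sq_mul_im_neg_inv_div hβ.ne' hq₂ hr₂).congr' <| by
      filter_upwards [eventually_ne_atTop 0] with η hη
      rw [hm₁ η hη]
  have hre₁ : Tendsto (fun η : ℝ => (m₁ (I * η)).re) atTop (𝓝 0) :=
    (tendsto_re_neg_inv hβ.ne' hq₂ hr₂).congr' <| by
      filter_upwards [eventually_ne_atTop 0] with η hη
      rw [hm₁ η hη]
  obtain rfl := hrep₁.eq_zero_of_tendsto_sq_mul_im_div hq₁
  have hrel' (z : ℂ) (hz : z.im ≠ 0) : m₂ z = -(m₁ z)⁻¹ := by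
    rw [hrel z hz, inv_neg, inv_inv, neg_neg]
  exact ⟨hasMomentsUpTo_add_two_of_neg_inv hrep₁ hrep₂ hrel hβ.ne' hq₂,
    hasMomentsUpTo_of_neg_inv_add_two hrep₂ hrep₁ hrel' (inv_ne_zero hβ.ne') hq₁ hre₁⟩

theorem stmt_10 (m₁ m₂ : ℂ → ℂ) (h₁ : IsHerglotz m₁) (h₂ : IsHerglotz m₂)
    (a₁ b₁ a₂ b₂ : ℝ) (ρ₁ ρ₂ : Measure ℝ)
    (hrep₁ : HerglotzRep m₁ a₁ b₁ ρ₁) (hrep₂ : HerglotzRep m₂ a₂ b₂ ρ₂)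
    (hrel : ∀ z : ℂ, z.im ≠ 0 → m₁ z = -(m₂ z)⁻¹)
    (β : ℝ) (hβ : 0 < β)
    (hlim : Tendsto (fun η : ℝ => m₂ (Complex.I * (η : ℂ)) / (Complex.I * (η : ℂ)))
      atTop (nhds (β : ℂ)))
    (K : ℕ) :
    (∀ j ≤ 2 * K, Integrable (fun l : ℝ => |l| ^ j) ρ₂) ↔
      (∀ j ≤ 2 * K + 2, Integrable (fun l : ℝ => |l| ^ j) ρ₁) :=
  stmt_10_general m₁ m₂ a₁ b₁ a₂ b₂ ρ₁ ρ₂ hrep₁ hrep₂ hrel β hβ hlim K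
end

section
/- Let q̃₁, q̃₂ be Herglotz–Nevanlinna functions with (1/q̃₁(iη) − 1/q̃₂(iη))/(iη) → 0 as η → ∞, let l_N > 0, and define q_{i,N} by 1/q_{i,N}(z) = −l_N z + 1/q̃_i(z). If additionally lim_{η→∞} q̃₁(iη)/(iη) = lim_{η→∞} q̃₂(iη)/(iη) = β, set j = 1 if β > 0 and j = 0 otherwise; then q_{1,N}(iη) − q_{2,N}(iη) = o(η^{−1−2j}) as η → ∞. -/
open Filter Complex Asymptotics

/-!
Along the imaginary axis `Im (1 / q̃ᵢ) ≤ 0`, so `Im (1 / q_{i,N}(iη)) ≤ -l_N η` and hence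
`q_{i,N}(iη) = O(1/η)`. Since `1/q_{1,N} - 1/q_{2,N} = 1/q̃₁ - 1/q̃₂`, we get
`q_{1,N} - q_{2,N} = (1/q̃₂ - 1/q̃₁) q_{1,N} q_{2,N}`, and it remains to bound `1/q̃₂ - 1/q̃₁`:
it is `o(η)` by assumption, and `o(1/η)` when `β > 0`, because then
`(1/q̃₂ - 1/q̃₁)(iη) · iη = (iη/q̃₂(iη)) - (iη/q̃₁(iη)) → 1/β - 1/β = 0`.
-/

lemma IsHerglotz.inv_im_nonpos {m : ℂ → ℂ} (hm : IsHerglotz m) {z : ℂ} (hz : 0 < z.im) :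
    ((m z)⁻¹).im ≤ 0 := by
  rw [Complex.inv_im]
  exact div_nonpos_of_nonpos_of_nonneg (neg_nonpos.mpr (hm.2.1 z hz)) (Complex.normSq_nonneg _)

section InvShift

variable {m q : ℂ → ℂ} {l : ℝ}

lemma inv_im_le_of_inv_eq (hm : IsHerglotz m)
    (hdef : ∀ z : ℂ, z.im ≠ 0 → (q z)⁻¹ = -(l : ℂ) * z + (m z)⁻¹) {z : ℂ} (hz : 0 < z.im) :
    ((q z)⁻¹).im ≤ -(l * z.im) := by
  have hm_im := hm.inv_im_nonpos hz
  rw [hdef z hz.ne', add_im, neg_mul, neg_im, im_ofReal_mul]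
  linarith

lemma norm_le_of_inv_eq (hm : IsHerglotz m) (hl : 0 < l)
    (hdef : ∀ z : ℂ, z.im ≠ 0 → (q z)⁻¹ = -(l : ℂ) * z + (m z)⁻¹) {z : ℂ} (hz : 0 < z.im) :
    ‖q z‖ ≤ (l * z.im)⁻¹ := by
  have hpos : 0 < l * z.im := mul_pos hl hz
  have him := inv_im_le_of_inv_eq hm hdef hz
  have hlow : l * z.im ≤ ‖q z‖⁻¹ :=
    calc l * z.im ≤ |((q z)⁻¹).im| := by rw [abs_of_neg (by linarith)]; linarith
      _ ≤ ‖(q z)⁻¹‖ := abs_im_le_norm _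
      _ = ‖q z‖⁻¹ := norm_inv _
  exact le_inv_of_le_inv₀ hpos hlow

lemma ne_zero_of_inv_eq (hm : IsHerglotz m) (hl : 0 < l)
    (hdef : ∀ z : ℂ, z.im ≠ 0 → (q z)⁻¹ = -(l : ℂ) * z + (m z)⁻¹) {z : ℂ} (hz : 0 < z.im) :
    q z ≠ 0 := by
  intro h0
  have := inv_im_le_of_inv_eq hm hdef hz
  rw [h0, inv_zero, zero_im] at this
  nlinarith

lemma isBigO_inv_of_inv_eq (hm : IsHerglotz m) (hl : 0 < l)
    (hdef : ∀ z : ℂ, z.im ≠ 0 → (q z)⁻¹ = -(l : ℂ) * z + (m z)⁻¹) :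
    (fun η : ℝ => q (I * η)) =O[atTop] fun η : ℝ => η⁻¹ := by
  refine isBigO_iff.mpr ⟨l⁻¹, ?_⟩
  filter_upwards [eventually_gt_atTop 0] with η hη
  have h := norm_le_of_inv_eq hm hl hdef (z := I * η) (by simpa using hη)
  rw [Real.norm_eq_abs, abs_inv, abs_of_pos hη, ← mul_inv]
  simpa using h

end InvShift

lemma isLittleO_id_of_tendsto_div {f : ℝ → ℂ}
    (hf : Tendsto (fun η : ℝ => f η / (I * η)) atTop (nhds 0)) :
    f =o[atTop] fun η : ℝ => η := by
  have hI : f =o[atTop] fun η : ℝ => I * η := by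
    refine (isLittleO_iff_tendsto' ?_).mpr hf
    filter_upwards [eventually_gt_atTop 0] with η hη h0
    exact absurd h0 (mul_ne_zero I_ne_zero (ofReal_ne_zero.mpr hη.ne'))
  exact hI.trans_isBigO (isBigO_of_le _ fun η => by simp)

lemma inv_sub_inv_isLittleO_of_tendsto_div {m₁ m₂ : ℂ → ℂ} {β : ℂ} (hβ : β ≠ 0)
    (h₁ : Tendsto (fun η : ℝ => m₁ (I * η) / (I * η)) atTop (nhds β))
    (h₂ : Tendsto (fun η : ℝ => m₂ (I * η) / (I * η)) atTop (nhds β)) :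
    (fun η : ℝ => (m₂ (I * η))⁻¹ - (m₁ (I * η))⁻¹) =o[atTop] fun η : ℝ => η⁻¹ := by
  have hlim : Tendsto (fun η : ℝ => (m₂ (I * η) / (I * η))⁻¹ - (m₁ (I * η) / (I * η))⁻¹)
      atTop (nhds 0) := by
    simpa using (h₂.inv₀ hβ).sub (h₁.inv₀ hβ)
  have hI : (fun η : ℝ => (m₂ (I * η))⁻¹ - (m₁ (I * η))⁻¹) =o[atTop]
      fun η : ℝ => (I * η)⁻¹ := by
    refine (isLittleO_iff_tendsto' ?_).mpr (hlim.congr fun η => ?_)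
    · filter_upwards [eventually_gt_atTop 0] with η hη h0
      simp [hη.ne'] at h0
    · simp only [inv_div, div_inv_eq_mul, sub_mul]
      ring
  exact hI.trans_isBigO (isBigO_of_le _ fun η => by simp)

lemma sub_isLittleO_of_inv_sub_inv {m₁ m₂ q₁ q₂ : ℂ → ℂ} {l : ℝ} (hl : 0 < l)
    (hm₁ : IsHerglotz m₁) (hm₂ : IsHerglotz m₂)
    (hdef₁ : ∀ z : ℂ, z.im ≠ 0 → (q₁ z)⁻¹ = -(l : ℂ) * z + (m₁ z)⁻¹)
    (hdef₂ : ∀ z : ℂ, z.im ≠ 0 → (q₂ z)⁻¹ = -(l : ℂ) * z + (m₂ z)⁻¹) {g : ℝ → ℝ}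
    (hg : (fun η : ℝ => (m₂ (I * η))⁻¹ - (m₁ (I * η))⁻¹) =o[atTop] g) :
    (fun η : ℝ => q₁ (I * η) - q₂ (I * η)) =o[atTop] fun η => g η * (η⁻¹ * η⁻¹) := by
  have hprod := hg.mul_isBigO
    ((isBigO_inv_of_inv_eq hm₁ hl hdef₁).mul (isBigO_inv_of_inv_eq hm₂ hl hdef₂))
  refine hprod.congr' ?_ EventuallyEq.rfl
  filter_upwards [eventually_gt_atTop 0] with η hη
  have hz : 0 < (I * (η : ℂ)).im := by simpa using hη
  have h₁ := ne_zero_of_inv_eq hm₁ hl hdef₁ hz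
  have h₂ := ne_zero_of_inv_eq hm₂ hl hdef₂ hz
  rw [show (m₂ (I * η))⁻¹ - (m₁ (I * η))⁻¹ = (q₂ (I * η))⁻¹ - (q₁ (I * η))⁻¹ by
    rw [hdef₁ _ hz.ne', hdef₂ _ hz.ne']; ring]
  field_simp

theorem stmt_19_general (qt₁ qt₂ q₁ q₂ : ℂ → ℂ)
    (hqt₁ : IsHerglotz qt₁) (hqt₂ : IsHerglotz qt₂)
    (lN : ℝ) (hlN : 0 < lN)
    (hdef₁ : ∀ z : ℂ, z.im ≠ 0 → (q₁ z)⁻¹ = -(lN : ℂ) * z + (qt₁ z)⁻¹)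
    (hdef₂ : ∀ z : ℂ, z.im ≠ 0 → (q₂ z)⁻¹ = -(lN : ℂ) * z + (qt₂ z)⁻¹)
    (hclose : Tendsto (fun η : ℝ =>
        ((qt₁ (Complex.I * (η : ℂ)))⁻¹ - (qt₂ (Complex.I * (η : ℂ)))⁻¹) /
          (Complex.I * (η : ℂ))) atTop (nhds 0))
    (β : ℝ)
    (hβ₁ : Tendsto (fun η : ℝ =>
        qt₁ (Complex.I * (η : ℂ)) / (Complex.I * (η : ℂ))) atTop (nhds (β : ℂ)))
    (hβ₂ : Tendsto (fun η : ℝ =>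
        qt₂ (Complex.I * (η : ℂ)) / (Complex.I * (η : ℂ))) atTop (nhds (β : ℂ))) :
    (fun η : ℝ => q₁ (Complex.I * (η : ℂ)) - q₂ (Complex.I * (η : ℂ)))
      =o[atTop] fun η : ℝ => η ^ (-1 - 2 * (if 0 < β then (1 : ℝ) else 0)) := by
  by_cases hβ : 0 < β
  · have hD := inv_sub_inv_isLittleO_of_tendsto_div (ofReal_ne_zero.mpr hβ.ne') hβ₁ hβ₂
    refine (sub_isLittleO_of_inv_sub_inv hlN hqt₁ hqt₂ hdef₁ hdef₂ hD).trans_eventuallyEq ?_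
    filter_upwards [eventually_gt_atTop 0] with η hη
    rw [if_pos hβ, show (-1 - 2 * 1 : ℝ) = -(3 : ℕ) by norm_num, Real.rpow_neg hη.le,
      Real.rpow_natCast]
    ring
  · have hD : (fun η : ℝ => (qt₂ (I * η))⁻¹ - (qt₁ (I * η))⁻¹) =o[atTop] fun η => η :=
      isLittleO_id_of_tendsto_div (by simpa only [← neg_div, neg_sub, neg_zero] using hclose.neg)
    refine (sub_isLittleO_of_inv_sub_inv hlN hqt₁ hqt₂ hdef₁ hdef₂ hD).trans_eventuallyEq ?_
    filter_upwards [eventually_gt_atTop 0] with η hη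
    rw [if_neg hβ, show (-1 - 2 * 0 : ℝ) = -1 by norm_num, Real.rpow_neg_one]
    field_simp

theorem stmt_19 (qt₁ qt₂ q₁ q₂ : ℂ → ℂ)
    (hqt₁ : IsHerglotz qt₁) (hqt₂ : IsHerglotz qt₂)
    (hq₁ : IsHerglotz q₁) (hq₂ : IsHerglotz q₂)
    (lN : ℝ) (hlN : 0 < lN)
    (hdef₁ : ∀ z : ℂ, z.im ≠ 0 → (q₁ z)⁻¹ = -(lN : ℂ) * z + (qt₁ z)⁻¹)
    (hdef₂ : ∀ z : ℂ, z.im ≠ 0 → (q₂ z)⁻¹ = -(lN : ℂ) * z + (qt₂ z)⁻¹)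
    (hclose : Tendsto (fun η : ℝ =>
        ((qt₁ (Complex.I * (η : ℂ)))⁻¹ - (qt₂ (Complex.I * (η : ℂ)))⁻¹) /
          (Complex.I * (η : ℂ))) atTop (nhds 0))
    (β : ℝ)
    (hβ₁ : Tendsto (fun η : ℝ =>
        qt₁ (Complex.I * (η : ℂ)) / (Complex.I * (η : ℂ))) atTop (nhds (β : ℂ)))
    (hβ₂ : Tendsto (fun η : ℝ =>
        qt₂ (Complex.I * (η : ℂ)) / (Complex.I * (η : ℂ))) atTop (nhds (β : ℂ))) :
    (fun η : ℝ => q₁ (Complex.I * (η : ℂ)) - q₂ (Complex.I * (η : ℂ)))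
      =o[atTop] fun η : ℝ => η ^ (-1 - 2 * (if 0 < β then (1 : ℝ) else 0)) :=
  stmt_19_general qt₁ qt₂ q₁ q₂ hqt₁ hqt₂ lN hlN hdef₁ hdef₂ hclose β hβ₁ hβ₂
end
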